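/- arXiv:2502.13742 — 15 statements merged into one kernel-verified Lean document; each statement's English description precedes it below -/
import Mathlib

section
/- Let n ≥ 2 be an integer and w_1, ..., w_n be strictly positive real numbers. There exists a family of non-negative real numbers (α_{ij})_{i≠j, 1≤i,j≤n} satisfying Σ_{j≠i} α_{ij} w_j = w_i for every i and Σ_{i≠j} α_{ij} = 1 for every j, if and only if w_i ≤ Σ_{j≠i} w_j for every i. -/
/-!
Writing `β i j = α i j * w j`, a fair transfer is the same thing as a non-negative matrix with
zero diagonal whose rows and columns both sum to `w`. Necessity is immediate: a column sums to
`1`, so `α i j ≤ 1`. For sufficiency, split the participants into three groups, each carrying at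
most half of the total weight `W`: a heaviest group of weight at most `W / 2`, one further
participant, and the rest. Between three groups of weights `σ` the symmetric matrix
`σ k + σ l - W / 2` works, and it is spread over individuals in proportion to their weights.
-/

open Finset

section FairTransfer

variable {ι : Type*} [Fintype ι] [DecidableEq ι]

def IsFairTransfer (w : ι → ℝ) (α : ι → ι → ℝ) : Prop :=
  (∀ i j, i ≠ j → 0 ≤ α i j) ∧
    (∀ i, ∑ j ∈ univ.erase i, α i j * w j = w i) ∧
    (∀ j, ∑ i ∈ univ.erase j, α i j = 1)

theorem IsFairTransfer.le_sum_erase {w : ι → ℝ} {α : ι → ι → ℝ} (hα : IsFairTransfer w α)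
    (hw : ∀ i, 0 ≤ w i) (i : ι) : w i ≤ ∑ j ∈ univ.erase i, w j := by
  obtain ⟨hα_nonneg, hα_row, hα_col⟩ := hα
  rw [← hα_row i]
  refine sum_le_sum fun j hj => mul_le_of_le_one_left (hw j) ?_
  rw [← hα_col j]
  exact single_le_sum (fun k hk => hα_nonneg k j (ne_of_mem_erase hk))
    (mem_erase.2 ⟨(ne_of_mem_erase hj).symm, mem_univ i⟩)

end FairTransfer

structure IsOffDiagCoupling {ι : Type*} [Fintype ι] (w : ι → ℝ) (β : ι → ι → ℝ) : Prop where
  nonneg : ∀ i j, 0 ≤ β i j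
  diag : ∀ i, β i i = 0
  symm : ∀ i j, β i j = β j i
  sum_row : ∀ i, ∑ j, β i j = w i

namespace IsOffDiagCoupling

variable {ι κ : Type*} [Fintype ι] [Fintype κ] {w : ι → ℝ} {β : ι → ι → ℝ}

theorem sum_col (hβ : IsOffDiagCoupling w β) (j : ι) : ∑ i, β i j = w j := by
  simpa only [hβ.symm _ j] using hβ.sum_row j

theorem le_right (hβ : IsOffDiagCoupling w β) (i j : ι) : β i j ≤ w j := by
  rw [← hβ.sum_col j]
  exact single_le_sum (fun k _ => hβ.nonneg k j) (mem_univ i)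

theorem isFairTransfer [DecidableEq ι] (hβ : IsOffDiagCoupling w β) (hw : ∀ i, 0 < w i) :
    IsFairTransfer w fun i j => β i j / w j := by
  refine ⟨fun i j _ => div_nonneg (hβ.nonneg i j) (hw j).le, fun i => ?_, fun j => ?_⟩
  · simp only [div_mul_cancel₀ _ (hw _).ne']
    rw [sum_erase _ (hβ.diag i), hβ.sum_row]
  · rw [← sum_div, sum_erase (f := fun i => β i j) _ (hβ.diag j), hβ.sum_col, div_self (hw j).ne']

theorem comap [DecidableEq κ] (hw : ∀ i, 0 < w i) (g : ι → κ) {γ : κ → κ → ℝ}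
    (hγ : IsOffDiagCoupling (fun k => ∑ i with g i = k, w i) γ) :
    IsOffDiagCoupling w fun i j =>
      γ (g i) (g j) * (w i / ∑ i' with g i' = g i, w i') * (w j / ∑ j' with g j' = g j, w j') := by
  set σ : κ → ℝ := fun k => ∑ i with g i = k, w i
  have hσ_pos (i : ι) : 0 < σ (g i) :=
    (hw i).trans_le (single_le_sum (fun j _ => (hw j).le) (by simp))
  refine ⟨fun i j => ?_, fun i => by simp [hγ.diag], fun i j => by rw [hγ.symm]; ring, fun i => ?_⟩
  · exact mul_nonneg (mul_nonneg (hγ.nonneg _ _) (div_nonneg (hw i).le (hσ_pos i).le))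
      (div_nonneg (hw j).le (hσ_pos j).le)
  · -- `g` need not be onto: an empty group has weight `0`, and then `γ` vanishes on its column.
    have hcancel (l : κ) : γ (g i) l * (σ l / σ l) = γ (g i) l := by
      rcases eq_or_ne (σ l) 0 with h | h
      · simp [le_antisymm (h ▸ hγ.le_right (g i) l) (hγ.nonneg _ _)]
      · rw [div_self h, mul_one]
    calc ∑ j, γ (g i) (g j) * (w i / σ (g i)) * (w j / σ (g j))
        = ∑ l, ∑ j with g j = l, γ (g i) l * (w i / σ (g i)) * (w j / σ l) := by
          rw [← sum_fiberwise univ g]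
          exact sum_congr rfl fun l _ => sum_congr rfl fun j hj => by rw [(mem_filter.1 hj).2]
      _ = ∑ l, γ (g i) l * (σ l / σ l) * (w i / σ (g i)) := by
          refine sum_congr rfl fun l _ => ?_
          rw [← mul_sum, sum_div]; ring
      _ = w i := by
          simp only [hcancel, ← sum_mul, hγ.sum_row]
          exact mul_div_cancel₀ _ (hσ_pos i).ne'

theorem exists_of_fin_three {σ : Fin 3 → ℝ} (hσ : ∀ k, 2 * σ k ≤ ∑ l, σ l) :
    ∃ γ, IsOffDiagCoupling σ γ := by
  refine ⟨fun k l => if k = l then 0 else σ k + σ l - (∑ m, σ m) / 2, ⟨?_, ?_, ?_, ?_⟩⟩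
  · intro k l
    have h0 := hσ 0; have h1 := hσ 1; have h2 := hσ 2
    simp only [Fin.sum_univ_three] at h0 h1 h2 ⊢
    fin_cases k <;> fin_cases l <;> simp <;> linarith
  · simp
  · intro k l
    simp only [eq_comm (a := k)]
    split_ifs <;> ring
  · intro k
    fin_cases k <;> simp [Fin.sum_univ_three] <;> ring

end IsOffDiagCoupling

theorem exists_fin_three_coloring_two_mul_sum_le {ι : Type*} [Fintype ι] [DecidableEq ι] {w : ι → ℝ}
    (hw : ∀ i, 0 < w i) (hle : ∀ i, 2 * w i ≤ ∑ j, w j) :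
    ∃ g : ι → Fin 3, ∀ k, 2 * ∑ i with g i = k, w i ≤ ∑ j, w j := by
  set S := ∑ j, w j
  have hS : 0 ≤ S := sum_nonneg fun j _ => (hw j).le
  obtain ⟨A, hA_mem, hAmax⟩ := exists_max_image {A : Finset ι | 2 * ∑ i ∈ A, w i ≤ S}
    (fun A => ∑ i ∈ A, w i) ⟨∅, by simpa using hS⟩
  have hA : 2 * ∑ i ∈ A, w i ≤ S := (mem_filter.1 hA_mem).2
  by_cases hA_univ : A = univ
  · refine ⟨fun _ => 0, fun k => ?_⟩
    rw [hA_univ] at hA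
    linarith [sum_le_sum_of_subset_of_nonneg (filter_subset (fun _ => (0 : Fin 3) = k) univ)
      fun j _ _ => (hw j).le]
  obtain ⟨j, hj⟩ : ∃ j, j ∉ A := by simpa [eq_univ_iff_forall] using hA_univ
  have hAj : S < 2 * ∑ i ∈ insert j A, w i := by
    by_contra! h
    have := hAmax _ (by simpa using h)
    rw [sum_insert hj] at this
    linarith [hw j]
  set g : ι → Fin 3 := fun i => if i ∈ A then 0 else if i = j then 1 else 2
  have hfiber (k : Fin 3) (s : Finset ι) (h : ∀ i, g i = k ↔ i ∈ s) :
      ({i | g i = k} : Finset ι) = s := by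
    ext i; simpa using h i
  refine ⟨g, fun k => ?_⟩
  match k with
  | 0 =>
    rw [hfiber 0 A fun i => by by_cases hi : i ∈ A <;> by_cases hij : i = j <;> simp_all [g]]
    exact hA
  | 1 =>
    rw [hfiber 1 {j} fun i => by by_cases hi : i ∈ A <;> by_cases hij : i = j <;> simp_all [g]]
    simpa using hle j
  | 2 =>
    rw [hfiber 2 (univ \ insert j A) fun i => by
      by_cases hi : i ∈ A <;> by_cases hij : i = j <;> simp_all [g]]
    linarith [sum_sdiff (subset_univ (insert j A)) (f := w)]

theorem stmt_1_general (n : ℕ) (w : Fin n → ℝ) (hw : ∀ i, 0 < w i) :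
    (∃ α : Fin n → Fin n → ℝ,
        (∀ i j, i ≠ j → 0 ≤ α i j) ∧
        (∀ i, ∑ j ∈ Finset.univ.erase i, α i j * w j = w i) ∧
        (∀ j, ∑ i ∈ Finset.univ.erase j, α i j = 1)) ↔
      ∀ i, w i ≤ ∑ j ∈ Finset.univ.erase i, w j := by
  refine ⟨fun ⟨α, hα⟩ => IsFairTransfer.le_sum_erase hα fun i => (hw i).le, fun h => ?_⟩
  have hle (i : Fin n) : 2 * w i ≤ ∑ j, w j := by
    linarith [h i, add_sum_erase univ w (mem_univ i)]
  obtain ⟨g, hg⟩ := exists_fin_three_coloring_two_mul_sum_le hw hle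
  obtain ⟨γ, hγ⟩ := IsOffDiagCoupling.exists_of_fin_three
    (σ := fun k => ∑ i with g i = k, w i) (by simpa only [sum_fiberwise] using hg)
  exact ⟨_, (hγ.comap hw g).isFairTransfer hw⟩

/-- Solvability criterion for the fair-transfer linear system: non-negative transfer
fractions with unit column sums and fair row sums exist iff no weight exceeds the sum
of the other weights. -/
theorem stmt_1 (n : ℕ) (hn : 2 ≤ n) (w : Fin n → ℝ) (hw : ∀ i, 0 < w i) :
    (∃ α : Fin n → Fin n → ℝ,
        (∀ i j, i ≠ j → 0 ≤ α i j) ∧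
        (∀ i, ∑ j ∈ Finset.univ.erase i, α i j * w j = w i) ∧
        (∀ j, ∑ i ∈ Finset.univ.erase j, α i j = 1)) ↔
      ∀ i, w i ≤ ∑ j ∈ Finset.univ.erase i, w j :=
  stmt_1_general n w hw
end

section
/- Let w_1, w_2, w_3 be strictly positive real numbers and, for each permutation (i, j, l) of (1, 2, 3), define α_{ij} := (w_i + w_j − w_l)/(2 w_j). Then Σ_{j≠i} α_{ij} w_j = w_i for every i ∈ {1,2,3} and Σ_{i≠j} α_{ij} = 1 for every j ∈ {1,2,3}. Moreover, all six numbers α_{ij} are non-negative if and only if 2 w_i ≤ w_1 + w_2 + w_3 for every i ∈ {1,2,3}. -/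
/-- Explicit three-participant solution `α_{ij} = (w_i + w_j - w_l)/(2 w_j)` of the
fair-transfer linear system: row fairness, unit column sums, and non-negativity of all
six coefficients iff `2 w_i ≤ w_1 + w_2 + w_3` for every `i`. -/
theorem stmt_2 (w1 w2 w3 : ℝ) (h1 : 0 < w1) (h2 : 0 < w2) (h3 : 0 < w3) :
    ((w1 + w2 - w3) / (2 * w2) * w2 + (w1 + w3 - w2) / (2 * w3) * w3 = w1 ∧
     (w2 + w1 - w3) / (2 * w1) * w1 + (w2 + w3 - w1) / (2 * w3) * w3 = w2 ∧
     (w3 + w1 - w2) / (2 * w1) * w1 + (w3 + w2 - w1) / (2 * w2) * w2 = w3) ∧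
    ((w2 + w1 - w3) / (2 * w1) + (w3 + w1 - w2) / (2 * w1) = 1 ∧
     (w1 + w2 - w3) / (2 * w2) + (w3 + w2 - w1) / (2 * w2) = 1 ∧
     (w1 + w3 - w2) / (2 * w3) + (w2 + w3 - w1) / (2 * w3) = 1) ∧
    ((0 ≤ (w1 + w2 - w3) / (2 * w2) ∧ 0 ≤ (w1 + w3 - w2) / (2 * w3) ∧
      0 ≤ (w2 + w1 - w3) / (2 * w1) ∧ 0 ≤ (w2 + w3 - w1) / (2 * w3) ∧
      0 ≤ (w3 + w1 - w2) / (2 * w1) ∧ 0 ≤ (w3 + w2 - w1) / (2 * w2)) ↔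
     (2 * w1 ≤ w1 + w2 + w3 ∧ 2 * w2 ≤ w1 + w2 + w3 ∧ 2 * w3 ≤ w1 + w2 + w3)) := by
  have n1 := h1.ne'
  have n2 := h2.ne'
  have n3 := h3.ne'
  refine ⟨⟨by field_simp; ring, by field_simp; ring, by field_simp; ring⟩,
    ⟨by field_simp; ring, by field_simp; ring, by field_simp; ring⟩, ?_⟩
  have p1 : (0:ℝ) < 2 * w1 := by linarith
  have p2 : (0:ℝ) < 2 * w2 := by linarith
  have p3 : (0:ℝ) < 2 * w3 := by linarith
  simp only [le_div_iff₀ p1, le_div_iff₀ p2, le_div_iff₀ p3, zero_mul]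
  exact ⟨fun ⟨a,b,c,d,e,f⟩ => ⟨by linarith, by linarith, by linarith⟩, fun ⟨a,b,c⟩ => ⟨by linarith, by linarith, by linarith, by linarith, by linarith, by linarith⟩⟩
end

section
/- Let n ≥ 3 be an integer and w_1, ..., w_n be strictly positive real numbers. For i ≠ j define α_{ij} := (w_i + w_j)/((n−1) w_j) − (Σ_{l≠i,j} w_l)/((n−1)(n−2) w_j). Then Σ_{j≠i} α_{ij} w_j = w_i for every i and Σ_{i≠j} α_{ij} = 1 for every j. Moreover, if (n−2)(w_i + w_j) ≥ Σ_{l≠i,j} w_l for all pairs i ≠ j, then α_{ij} ≥ 0 for all i ≠ j. -/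
/-!
With `S = ∑ l, w l`, the transfer `α i j * w j` equals
`((n - 1) (w i + w j) - S) / ((n - 1) (n - 2))`, which is symmetric in `i` and `j`.
Summing the numerator over `j ≠ i` gives `(n - 1) (n - 2) w i`; this is the row condition, and by
symmetry, after dividing by `w j`, also the column condition. The numerator is
`(n - 2) (w i + w j) - ∑_{l ≠ i, j} w l`, whence non-negativity.
-/

open Finset

variable {ι R : Type*} [Fintype ι]

/-- The amount `α i j * w j` that a deceased participant `j` passes to the survivor `i`. -/
noncomputable def fairTransfer (w : ι → ℝ) (i j : ι) : ℝ :=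
  (((Fintype.card ι : ℝ) - 1) * (w i + w j) - ∑ l, w l) /
    (((Fintype.card ι : ℝ) - 1) * ((Fintype.card ι : ℝ) - 2))

theorem fairTransfer_comm (w : ι → ℝ) (i j : ι) : fairTransfer w i j = fairTransfer w j i := by
  rw [fairTransfer, fairTransfer, add_comm (w i)]

variable [DecidableEq ι]

theorem sum_erase_erase_eq_sum_sub_sub [AddCommGroup R] (w : ι → R) {i j : ι} (hij : i ≠ j) :
    ∑ l ∈ (univ.erase i).erase j, w l = ∑ l, w l - w i - w j := by
  rw [sum_erase_eq_sub (mem_erase.2 ⟨hij.symm, mem_univ j⟩), sum_erase_eq_sub (mem_univ i)]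

theorem sum_erase_card_sub_one_mul_add_sub_sum [CommRing R] (w : ι → R) (i : ι) :
    ∑ j ∈ univ.erase i, (((Fintype.card ι : R) - 1) * (w i + w j) - ∑ l, w l) =
      ((Fintype.card ι : R) - 1) * ((Fintype.card ι : R) - 2) * w i := by
  simp only [sum_sub_distrib, ← mul_sum, sum_add_distrib, sum_erase_eq_sub (mem_univ i),
    sum_const, nsmul_eq_mul, card_univ]
  ring

theorem sum_erase_fairTransfer (hι : 3 ≤ Fintype.card ι) (w : ι → ℝ) (i : ι) :
    ∑ j ∈ univ.erase i, fairTransfer w i j = w i := by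
  have hι' : (3 : ℝ) ≤ Fintype.card ι := by exact_mod_cast hι
  have hden : ((Fintype.card ι : ℝ) - 1) * ((Fintype.card ι : ℝ) - 2) ≠ 0 := by
    apply mul_ne_zero <;> linarith
  simp only [fairTransfer]
  rw [← sum_div, sum_erase_card_sub_one_mul_add_sub_sum, mul_div_cancel_left₀ _ hden]

theorem fairTransfer_nonneg (w : ι → ℝ) {i j : ι} (hij : i ≠ j)
    (h : ∑ l ∈ (univ.erase i).erase j, w l ≤ ((Fintype.card ι : ℝ) - 2) * (w i + w j)) :
    0 ≤ fairTransfer w i j := by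
  rw [sum_erase_erase_eq_sum_sub_sub w hij] at h
  -- `(c - 1) * (c - 2) ≥ 0` for every natural number `c`
  have hden : 0 ≤ ((Fintype.card ι : ℝ) - 1) * ((Fintype.card ι : ℝ) - 2) := by
    rcases Nat.lt_or_ge (Fintype.card ι) 2 with hc | hc
    · interval_cases Fintype.card ι <;> norm_num
    · have hc' : (2 : ℝ) ≤ Fintype.card ι := by exact_mod_cast hc
      nlinarith
  exact div_nonneg (by linarith) hden

theorem div_sub_div_eq_fairTransfer_div (hι : 3 ≤ Fintype.card ι) (w : ι → ℝ) {i j : ι}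
    (hij : i ≠ j) (hwj : w j ≠ 0) :
    (w i + w j) / (((Fintype.card ι : ℝ) - 1) * w j)
        - (∑ l ∈ (univ.erase i).erase j, w l) /
            (((Fintype.card ι : ℝ) - 1) * ((Fintype.card ι : ℝ) - 2) * w j) =
      fairTransfer w i j / w j := by
  have hι' : (3 : ℝ) ≤ Fintype.card ι := by exact_mod_cast hι
  have h1 : (Fintype.card ι : ℝ) - 1 ≠ 0 := by linarith
  have h2 : (Fintype.card ι : ℝ) - 2 ≠ 0 := by linarith
  rw [fairTransfer, sum_erase_erase_eq_sum_sub_sub w hij]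
  field_simp
  ring

/-- Explicit n-participant solution of the fair-transfer linear system:
`α_{ij} = (w_i + w_j)/((n-1) w_j) - (∑_{l≠i,j} w_l)/((n-1)(n-2) w_j)` satisfies row
fairness and unit column sums, and is non-negative under the properness condition
`(n-2)(w_i + w_j) ≥ ∑_{l≠i,j} w_l`. -/
theorem stmt_3 (n : ℕ) (hn : 3 ≤ n) (w : Fin n → ℝ) (hw : ∀ i, 0 < w i)
    (α : Fin n → Fin n → ℝ)
    (hα : ∀ i j, i ≠ j →
      α i j = (w i + w j) / (((n : ℝ) - 1) * w j)
        - (∑ l ∈ (Finset.univ.erase i).erase j, w l) /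
            (((n : ℝ) - 1) * ((n : ℝ) - 2) * w j)) :
    (∀ i, ∑ j ∈ Finset.univ.erase i, α i j * w j = w i) ∧
    (∀ j, ∑ i ∈ Finset.univ.erase j, α i j = 1) ∧
    ((∀ i j, i ≠ j →
        ((n : ℝ) - 2) * (w i + w j) ≥ ∑ l ∈ (Finset.univ.erase i).erase j, w l) →
      ∀ i j, i ≠ j → 0 ≤ α i j) := by
  have hcard : 3 ≤ Fintype.card (Fin n) := by rwa [Fintype.card_fin]
  have hα' : ∀ i j, i ≠ j → α i j = fairTransfer w i j / w j := fun i j hij => by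
    rw [← div_sub_div_eq_fairTransfer_div hcard w hij (hw j).ne', hα i j hij, Fintype.card_fin]
  refine ⟨fun i => ?_, fun j => ?_, fun hproper i j hij => ?_⟩
  · rw [← sum_erase_fairTransfer hcard w i]
    refine sum_congr rfl fun j hj => ?_
    rw [hα' i j (ne_of_mem_erase hj).symm, div_mul_cancel₀ _ (hw j).ne']
  · rw [sum_congr rfl fun i hi => hα' i j (ne_of_mem_erase hi), ← sum_div]
    simp only [fairTransfer_comm w _ j]
    rw [sum_erase_fairTransfer hcard w j, div_self (hw j).ne']
  · rw [hα' i j hij]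
    refine div_nonneg (fairTransfer_nonneg w hij ?_) (hw j).le
    simpa only [Fintype.card_fin] using hproper i j hij
end

section
/- Let δ ≥ 0, s_0 > 0, and let f : [0,∞) → (0,∞) be continuous with ∫_0^∞ f(u) du = 1; set F(t) := ∫_0^t f(u) du and assume F(t) < 1 for all t ≥ 0. Suppose r : [0,∞) → ℝ is continuous and the discounted cash value x(t) := s_0 − ∫_0^t e^{−δu} r(u) du satisfies the instantaneous-fairness relation e^{−δt} r(t) (1 − F(t)) = f(t) x(t) for all t ≥ 0. Then r(t) = s_0 f(t) e^{δt} and x(t) = s_0 (1 − F(t)) for all t ≥ 0. -/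
open MeasureTheory Set

/-!
Write `x(t)` for the discounted cash value and `S(t) = 1 - F(t) > 0` for the survival
function. Fairness says `x' S = S' x`, so the quotient `x / S` has zero right derivative
and stays equal to its value `s₀` at `t = 0`; hence `x = s₀ S`, and substituting back into
the fairness relation and cancelling `S(t)` gives `r(t) = s₀ f(t) e^{δt}`.
-/

section Primitive

variable {g : ℝ → ℝ} {a : ℝ}

theorem hasDerivWithinAt_Ici_integral_of_continuousOn (hg : ContinuousOn g (Ici a))
    {x : ℝ} (hx : a ≤ x) :
    HasDerivWithinAt (fun u => ∫ v in a..u, g v) (g x) (Ici x) x := by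
  have hIoi : Ioi x ⊆ Ici a := fun y hy => hx.trans (le_of_lt hy)
  refine intervalIntegral.integral_hasDerivWithinAt_right ?_ ?_ ((hg x hx).mono hIoi)
  · exact (hg.mono (uIcc_of_le hx ▸ Icc_subset_Ici_self)).intervalIntegrable
  · exact ⟨Ioi x, self_mem_nhdsWithin, (hg.mono hIoi).aestronglyMeasurable measurableSet_Ioi⟩

theorem continuousOn_Icc_integral_of_continuousOn (hg : ContinuousOn g (Ici a))
    {b : ℝ} (hab : a ≤ b) :
    ContinuousOn (fun u => ∫ v in a..u, g v) (Icc a b) := by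
  rw [← uIcc_of_le hab]
  exact intervalIntegral.continuousOn_primitive_interval
    ((hg.mono (uIcc_of_le hab ▸ Icc_subset_Ici_self)).integrableOn_compact isCompact_uIcc)

end Primitive

theorem div_eq_div_of_hasDerivWithinAt_of_mul_eq {x S x' S' : ℝ → ℝ} {a b : ℝ}
    (hx : ContinuousOn x (Icc a b)) (hS : ContinuousOn S (Icc a b))
    (hS0 : ∀ t ∈ Icc a b, S t ≠ 0)
    (hx' : ∀ t ∈ Ico a b, HasDerivWithinAt x (x' t) (Ici t) t)
    (hS' : ∀ t ∈ Ico a b, HasDerivWithinAt S (S' t) (Ici t) t)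
    (hrel : ∀ t ∈ Ico a b, x' t * S t = S' t * x t) :
    ∀ t ∈ Icc a b, x t / S t = x a / S a := by
  refine constant_of_has_deriv_right_zero (hx.div hS hS0) fun t ht => ?_
  have hSt := hS0 t (Ico_subset_Icc_self ht)
  refine ((hx' t ht).div (hS' t ht) hSt).congr_deriv ?_
  rw [hrel t ht, mul_comm, sub_self, zero_div]

theorem stmt_4_general (δ s0 : ℝ)
    (f : ℝ → ℝ) (hf_cont : ContinuousOn f (Set.Ici 0))
    (hF_lt : ∀ t, 0 ≤ t → (∫ u in (0 : ℝ)..t, f u) < 1)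
    (r : ℝ → ℝ) (hr_cont : ContinuousOn r (Set.Ici 0))
    (hfair : ∀ t, 0 ≤ t →
      Real.exp (-δ * t) * r t * (1 - ∫ u in (0 : ℝ)..t, f u)
        = f t * (s0 - ∫ u in (0 : ℝ)..t, Real.exp (-δ * u) * r u)) :
    ∀ t, 0 ≤ t →
      r t = s0 * f t * Real.exp (δ * t) ∧
      s0 - (∫ u in (0 : ℝ)..t, Real.exp (-δ * u) * r u)
        = s0 * (1 - ∫ u in (0 : ℝ)..t, f u) := by
  intro t ht
  have ht' : t ∈ Icc 0 t := right_mem_Icc.2 ht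
  set F : ℝ → ℝ := fun t => ∫ u in (0 : ℝ)..t, f u
  set X : ℝ → ℝ := fun t => s0 - ∫ u in (0 : ℝ)..t, Real.exp (-δ * u) * r u
  have hg_cont : ContinuousOn (fun u => Real.exp (-δ * u) * r u) (Ici 0) :=
    (Real.continuous_exp.comp (continuous_const_mul (-δ))).continuousOn.mul hr_cont
  have hS0 : ∀ u ∈ Icc 0 t, 1 - F u ≠ 0 := fun u hu => by linarith [hF_lt u hu.1]
  have hratio : X t / (1 - F t) = X 0 / (1 - F 0) :=
    div_eq_div_of_hasDerivWithinAt_of_mul_eq (x := X) (S := fun u => 1 - F u)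
      (continuousOn_const.sub (continuousOn_Icc_integral_of_continuousOn hg_cont ht))
      (continuousOn_const.sub (continuousOn_Icc_integral_of_continuousOn hf_cont ht))
      hS0
      (fun u hu => (hasDerivWithinAt_Ici_integral_of_continuousOn hg_cont hu.1).const_sub s0)
      (fun u hu => (hasDerivWithinAt_Ici_integral_of_continuousOn hf_cont hu.1).const_sub 1)
      (fun u hu => by linear_combination -hfair u hu.1)
      t ht'
  have hX : X t = s0 * (1 - F t) := by
    simpa [X, F, div_eq_iff (hS0 t ht')] using hratio
  refine ⟨?_, hX⟩
  have hdisc : Real.exp (-δ * t) * r t = s0 * f t := by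
    have h := hfair t ht
    rw [show s0 - _ = X t from rfl, hX] at h
    exact mul_right_cancel₀ (hS0 t ht') (by linear_combination h)
  calc r t = Real.exp (-δ * t) * r t * Real.exp (δ * t) := by
        rw [mul_comm (Real.exp _), mul_assoc, ← Real.exp_add]; simp
    _ = s0 * f t * Real.exp (δ * t) := by rw [hdisc]

/-- The instantaneous-fairness relation between the payout rate and the cash value of a
single participant uniquely determines the payout rate `r(t) = s₀ f(t) e^{δt}` and the
cash value `x(t) = s₀ (1 - F(t))`. -/
theorem stmt_4 (δ s0 : ℝ) (hδ : 0 ≤ δ) (hs0 : 0 < s0)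
    (f : ℝ → ℝ) (hf_cont : ContinuousOn f (Set.Ici 0))
    (hf_pos : ∀ t, 0 ≤ t → 0 < f t)
    (hf_int : IntegrableOn f (Set.Ioi 0))
    (hf_one : ∫ u in Set.Ioi (0 : ℝ), f u = 1)
    (hF_lt : ∀ t, 0 ≤ t → (∫ u in (0 : ℝ)..t, f u) < 1)
    (r : ℝ → ℝ) (hr_cont : ContinuousOn r (Set.Ici 0))
    (hfair : ∀ t, 0 ≤ t →
      Real.exp (-δ * t) * r t * (1 - ∫ u in (0 : ℝ)..t, f u)
        = f t * (s0 - ∫ u in (0 : ℝ)..t, Real.exp (-δ * u) * r u)) :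
    ∀ t, 0 ≤ t →
      r t = s0 * f t * Real.exp (δ * t) ∧
      s0 - (∫ u in (0 : ℝ)..t, Real.exp (-δ * u) * r u)
        = s0 * (1 - ∫ u in (0 : ℝ)..t, f u) :=
  stmt_4_general δ s0 f hf_cont hF_lt r hr_cont hfair
end

section
/- Let (Ω, 𝔉, P) be a probability space, let 𝔉_0 ⊆ 𝔉_1 ⊆ ... ⊆ 𝔉_m ⊆ 𝔉 be sub-σ-algebras, let s ∈ ℝ, and let Y_1, ..., Y_m and S_0, S_1, ..., S_m be integrable real random variables with S_0 = s almost surely and each S_{k-1} being 𝔉_{k-1}-measurable. If the periodic fairness condition E[Y_k + S_k | 𝔉_{k-1}] = S_{k-1} holds almost surely for every k = 1, ..., m, then E[Σ_{k=1}^m Y_k + S_m] = s. -/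
open MeasureTheory Finset

/-! Taking expectations in the fairness condition gives `E[Y_{k+1}] + E[S_{k+1}] = E[S_k]` for
every period, and these identities telescope to `∑ E[Y_k] + E[S_m] = E[S_0] = s`. -/

theorem sum_Icc_add_eq_of_add_succ_eq {M : Type*} [AddCommMonoid M] (a b : ℕ → M) (n : ℕ)
    (h : ∀ k < n, a (k + 1) + b (k + 1) = b k) :
    ∑ k ∈ Icc 1 n, a k + b n = b 0 := by
  induction n with
  | zero => simp
  | succ n ih =>
    calc ∑ k ∈ Icc 1 (n + 1), a k + b (n + 1)
        = ∑ k ∈ Icc 1 n, a k + (a (n + 1) + b (n + 1)) := by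
          rw [sum_Icc_succ_top (Nat.le_add_left 1 n), add_assoc]
      _ = ∑ k ∈ Icc 1 n, a k + b n := by rw [h n n.lt_succ_self]
      _ = b 0 := ih fun k hk => h k (hk.trans n.lt_succ_self)

theorem stmt_7_general {Ω : Type*} {m0 : MeasurableSpace Ω} (μ : Measure Ω)
    [IsProbabilityMeasure μ]
    (m : ℕ) (𝔉 : ℕ → MeasurableSpace Ω)
    (h_le : ∀ k, k ≤ m → 𝔉 k ≤ m0)
    (s : ℝ) (Y S : ℕ → Ω → ℝ)
    (hY_int : ∀ k, 1 ≤ k → k ≤ m → Integrable (Y k) μ)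
    (hS_int : ∀ k, k ≤ m → Integrable (S k) μ)
    (hS0 : ∀ᵐ ω ∂μ, S 0 ω = s)
    (hfair : ∀ k, 1 ≤ k → k ≤ m →
      μ[fun ω => Y k ω + S k ω | 𝔉 (k - 1)] =ᵐ[μ] S (k - 1)) :
    ∫ ω, ((∑ k ∈ Finset.Icc 1 m, Y k ω) + S m ω) ∂μ = s := by
  have hY_int' : ∀ k ∈ Icc 1 m, Integrable (Y k) μ := fun k hk =>
    hY_int k (mem_Icc.mp hk).1 (mem_Icc.mp hk).2
  have hperiod : ∀ k < m, ∫ ω, Y (k + 1) ω ∂μ + ∫ ω, S (k + 1) ω ∂μ = ∫ ω, S k ω ∂μ := by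
    intro k hk
    rw [← integral_add (hY_int _ (Nat.le_add_left 1 k) hk) (hS_int _ hk),
      ← integral_condExp (h_le k hk.le)]
    exact integral_congr_ae (hfair (k + 1) (Nat.le_add_left 1 k) hk)
  rw [integral_add (integrable_finsetSum _ hY_int') (hS_int m le_rfl),
    integral_finsetSum _ hY_int', sum_Icc_add_eq_of_add_succ_eq (fun k => ∫ ω, Y k ω ∂μ)
      (fun k => ∫ ω, S k ω ∂μ) m hperiod,
    integral_congr_ae hS0, integral_const, probReal_univ, one_smul]

/-- Periodic fairness implies lifetime fairness: if in each period the conditional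
expectation of payments plus end-of-period cash value equals the beginning-of-period
cash value, then expected total discounted payments plus terminal cash value equal the
initial investment. -/
theorem stmt_7 {Ω : Type*} {m0 : MeasurableSpace Ω} (μ : Measure Ω)
    [IsProbabilityMeasure μ]
    (m : ℕ) (𝔉 : ℕ → MeasurableSpace Ω)
    (h_le : ∀ k, k ≤ m → 𝔉 k ≤ m0)
    (h_mono : ∀ k, k < m → 𝔉 k ≤ 𝔉 (k + 1))
    (s : ℝ) (Y S : ℕ → Ω → ℝ)
    (hY_int : ∀ k, 1 ≤ k → k ≤ m → Integrable (Y k) μ)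
    (hS_int : ∀ k, k ≤ m → Integrable (S k) μ)
    (hS0 : ∀ᵐ ω ∂μ, S 0 ω = s)
    (hS_meas : ∀ k, k < m → StronglyMeasurable[𝔉 k] (S k))
    (hfair : ∀ k, 1 ≤ k → k ≤ m →
      μ[fun ω => Y k ω + S k ω | 𝔉 (k - 1)] =ᵐ[μ] S (k - 1)) :
    ∫ ω, ((∑ k ∈ Finset.Icc 1 m, Y k ω) + S m ω) ∂μ = s :=
  stmt_7_general μ m 𝔉 h_le s Y S hY_int hS_int hS0 hfair
end

section
/- Let n ≥ 2 and let D be a random variable on a probability space taking values in {1, ..., n} with p_j := P(D = j) > 0 for every j. Let B_1, ..., B_n be integrable random variables with w_j := E[B_j · 1_{D = j}] > 0 for every j. Then there exist non-negative constants (α_{ij})_{i≠j} with Σ_{i≠j} α_{ij} = 1 for every j such that the one-period fairness condition E[B_i · 1_{D = i}] = Σ_{j≠i} α_{ij} E[B_j · 1_{D = j}] holds for every i, if and only if E[B_i · 1_{D = i}] ≤ Σ_{j≠i} E[B_j · 1_{D = j}] for every i. -/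
/-!
Putting `α i j = M i j / w j`, fairness asks for a non-negative matrix `M` with zero diagonal
whose `i`-th row and `i`-th column both sum to `w i`. To build it, lay arcs of lengths `w i` end
to end around a circle of circumference `S = ∑ w`, and let `M i j` be the length of the part of
arc `i` that the rotation by `S / 2` carries into arc `j`. Since the rotation preserves length, the
rows and columns have the right sums, and since no arc is longer than `S / 2`, no point of an arc
is rotated back into the same arc. Conversely, the column sums force `α i j ≤ 1`, which gives
`w i ≤ ∑ j ≠ i, w j`.
-/

open MeasureTheory Finset
open scoped ProbabilityTheory

section Coupling

open Function

variable {X ι : Type*} [MeasurableSpace X] [Fintype ι] {μ : Measure X} [IsFiniteMeasure μ]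

theorem sum_measure_inter_eq_of_sum_eq_measure_univ {F : ι → Set X}
    (hF : ∀ j, MeasurableSet (F j)) (hdisj : Pairwise (Disjoint on F))
    (hsum : ∑ j, μ (F j) = μ Set.univ) {A : Set X} (hA : MeasurableSet A) :
    ∑ j, μ (A ∩ F j) = μ A := by
  have hcover : μ (⋃ j, F j) = μ Set.univ := by
    rw [measure_iUnion hdisj hF, tsum_fintype, hsum]
  have hnull : μ (⋃ j, F j)ᶜ = 0 := by
    rw [measure_compl (MeasurableSet.iUnion hF) (measure_ne_top _ _), hcover, tsub_self]
  rw [← measure_inter_conull hnull, Set.inter_iUnion, measure_iUnion _ fun j => hA.inter (hF j),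
    tsum_fintype]
  exact fun i j hij => (hdisj hij).mono Set.inter_subset_right Set.inter_subset_right

theorem exists_matrix_zero_diag_of_measurePreserving {τ : X → X}
    (hτ : MeasurePreserving τ μ μ) {E : ι → Set X} (hE : ∀ i, MeasurableSet (E i))
    (hdisj : Pairwise (Disjoint on E))
    (hsum : ∑ i, μ (E i) = μ Set.univ) (hdiag : ∀ i, Disjoint (E i) (τ ⁻¹' E i)) :
    ∃ M : ι → ι → ℝ, (∀ i j, 0 ≤ M i j) ∧ (∀ i, M i i = 0) ∧
      (∀ i, ∑ j, M i j = μ.real (E i)) ∧ (∀ j, ∑ i, M i j = μ.real (E j)) := by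
  have hτE : ∀ j, MeasurableSet (τ ⁻¹' E j) := fun j => hτ.measurable (hE j)
  refine ⟨fun i j => μ.real (E i ∩ τ ⁻¹' E j), fun i j => measureReal_nonneg,
    fun i => by simp [(hdiag i).inter_eq], fun i => ?_, fun j => ?_⟩
  · rw [measureReal_def, ← sum_measure_inter_eq_of_sum_eq_measure_univ hτE
      (fun i j hij => (hdisj hij).preimage τ) _ (hE i),
      ENNReal.toReal_sum fun _ _ => measure_ne_top _ _]
    · rfl
    · simpa only [hτ.measure_preimage (hE _).nullMeasurableSet] using hsum
  · rw [measureReal_def, ← hτ.measure_preimage (hE j).nullMeasurableSet,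
      ← sum_measure_inter_eq_of_sum_eq_measure_univ hE hdisj hsum (hτE j),
      ENNReal.toReal_sum fun _ _ => measure_ne_top _ _]
    simp only [Set.inter_comm (τ ⁻¹' E j)]
    rfl

end Coupling

namespace AddCircle

theorem half_period_le_abs_sub {T a b : ℝ} (h : (b : AddCircle T) = a + (T / 2 : ℝ)) :
    |T| / 2 ≤ |b - a| := by
  have : ((T / 2 : ℝ) : AddCircle T) = (b - a : ℝ) := by
    rw [AddCircle.coe_sub, h]; abel
  calc |T| / 2 = ‖((T / 2 : ℝ) : AddCircle T)‖ := (norm_half_period_eq T).symm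
    _ = ‖((b - a : ℝ) : AddCircle T)‖ := by rw [this]
    _ ≤ |b - a| := QuotientAddGroup.norm_mk_le_norm

theorem volume_preimage_equivIoc {T : ℝ} [Fact (0 < T)] {a : ℝ} {s : Set ℝ}
    (hs : MeasurableSet s) (hsub : s ⊆ Set.Ioc a (a + T)) :
    volume {x : AddCircle T | (equivIoc T a x : ℝ) ∈ s} = volume s := by
  refine ((measurePreserving_equivIoc (T := T) (a := a)).measure_preimage
    (s := Subtype.val ⁻¹' s) (measurable_subtype_coe hs).nullMeasurableSet).trans ?_
  rw [Measure.comap_apply _ Subtype.val_injective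
    (fun _ => measurableSet_Ioc.subtype_image) _ (measurable_subtype_coe hs),
    Subtype.image_preimage_coe, Set.inter_eq_right.mpr hsub]

theorem disjoint_preimage_add_half_period {T : ℝ} [Fact (0 < T)] {a c d : ℝ} (hd : d ≤ T / 2) :
    Disjoint {x : AddCircle T | (equivIoc T a x : ℝ) ∈ Set.Ioc c (c + d)}
      ((· + ((T / 2 : ℝ) : AddCircle T)) ⁻¹'
        {x : AddCircle T | (equivIoc T a x : ℝ) ∈ Set.Ioc c (c + d)}) := by
  rw [Set.disjoint_left]
  rintro x ⟨hx₁, hx₂⟩ ⟨hy₁, hy₂⟩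
  set y := x + ((T / 2 : ℝ) : AddCircle T)
  have hfar : T / 2 ≤ |(equivIoc T a y : ℝ) - equivIoc T a x| := by
    simpa [abs_of_pos (Fact.out : 0 < T), y] using
      half_period_le_abs_sub (T := T) (a := equivIoc T a x) (b := equivIoc T a y)
  have hnear : |(equivIoc T a y : ℝ) - equivIoc T a x| < d :=
    abs_sub_lt_iff.mpr ⟨by linarith, by linarith⟩
  linarith

end AddCircle

section ConsecutiveIntervals

open Function

variable {ι : Type*} [LinearOrder ι] [LocallyFiniteOrderBot ι] {w : ι → ℝ}

def consecutiveIoc (w : ι → ℝ) (i : ι) : Set ℝ :=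
  Set.Ioc (∑ k ∈ Iio i, w k) (∑ k ∈ Iio i, w k + w i)

theorem volume_consecutiveIoc (i : ι) :
    volume (consecutiveIoc w i) = ENNReal.ofReal (w i) := by
  rw [consecutiveIoc, Real.volume_Ioc, add_sub_cancel_left]

theorem sum_Iio_add_le_sum_Iio (hw : ∀ i, 0 ≤ w i) {i j : ι} (hij : i < j) :
    ∑ k ∈ Iio i, w k + w i ≤ ∑ k ∈ Iio j, w k := by
  rw [sum_Iio_add_eq_sum_Iic]
  exact sum_le_sum_of_subset_of_nonneg (fun k hk => mem_Iio.2 ((mem_Iic.1 hk).trans_lt hij))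
    fun k _ _ => hw k

theorem pairwise_disjoint_consecutiveIoc (hw : ∀ i, 0 ≤ w i) :
    Pairwise (Disjoint on (consecutiveIoc w)) := by
  intro i j hij
  rcases hij.lt_or_gt with h | h
  · exact Set.Ioc_disjoint_Ioc_of_le (sum_Iio_add_le_sum_Iio hw h)
  · exact (Set.Ioc_disjoint_Ioc_of_le (sum_Iio_add_le_sum_Iio hw h)).symm

theorem consecutiveIoc_subset [Fintype ι] (hw : ∀ i, 0 ≤ w i) (i : ι) :
    consecutiveIoc w i ⊆ Set.Ioc 0 (∑ k, w k) := by
  refine Set.Ioc_subset_Ioc (sum_nonneg fun k _ => hw k) ?_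
  rw [sum_Iio_add_eq_sum_Iic]
  exact sum_le_sum_of_subset_of_nonneg (subset_univ _) fun k _ _ => hw k

end ConsecutiveIntervals

theorem exists_matrix_zero_diag_of_two_mul_le_sum {ι : Type*} [Fintype ι] {w : ι → ℝ}
    (hw : ∀ i, 0 ≤ w i) (hle : ∀ i, 2 * w i ≤ ∑ j, w j) :
    ∃ M : ι → ι → ℝ, (∀ i j, 0 ≤ M i j) ∧ (∀ i, M i i = 0) ∧
      (∀ i, ∑ j, M i j = w i) ∧ (∀ j, ∑ i, M i j = w j) := by
  let _ : LinearOrder ι := LinearOrder.lift' _ (Fintype.equivFin ι).injective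
  let _ : LocallyFiniteOrderBot ι :=
    LocallyFiniteOrderBot.ofIic ι (fun i => {k | k ≤ i}) (by simp)
  rcases (sum_nonneg fun j _ => hw j).eq_or_lt with hS | hS
  · have hw0 : ∀ i, w i = 0 := fun i =>
      (sum_eq_zero_iff_of_nonneg fun j _ => hw j).mp hS.symm i (mem_univ i)
    exact ⟨0, fun _ _ => le_rfl, fun _ => rfl, by simp [hw0], by simp [hw0]⟩
  set S := ∑ j, w j
  have : Fact (0 < S) := ⟨hS⟩
  let E i : Set (AddCircle S) := {x | (AddCircle.equivIoc S 0 x : ℝ) ∈ consecutiveIoc w i}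
  have hvol : ∀ i, volume (E i) = ENNReal.ofReal (w i) := fun i =>
    (AddCircle.volume_preimage_equivIoc measurableSet_Ioc
      (by rw [zero_add]; exact consecutiveIoc_subset hw i)).trans (volume_consecutiveIoc i)
  obtain ⟨M, hM0, hdiag, hrow, hcol⟩ := exists_matrix_zero_diag_of_measurePreserving
    (measurePreserving_add_right volume ((S / 2 : ℝ) : AddCircle S)) (E := E)
    (fun i => measurableSet_Ioc.preimage
      (measurable_subtype_coe.comp (AddCircle.measurableEquivIoc S 0).measurable))
    (fun i j hij => (pairwise_disjoint_consecutiveIoc hw hij).preimage _)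
    (by simp only [hvol]
        rw [AddCircle.measure_univ, ← ENNReal.ofReal_sum_of_nonneg fun i _ => hw i])
    fun i => AddCircle.disjoint_preimage_add_half_period (by linarith [hle i])
  have hreal : ∀ i, volume.real (E i) = w i := fun i => by
    rw [measureReal_def, hvol, ENNReal.toReal_ofReal (hw i)]
  exact ⟨M, hM0, hdiag, fun i => (hrow i).trans (hreal i), fun j => (hcol j).trans (hreal j)⟩

section SplittingFractions

variable {ι : Type*} [Fintype ι] [DecidableEq ι] {w : ι → ℝ} {α : ι → ι → ℝ}

theorem le_one_of_sum_erase_eq_one (hα : ∀ i j, i ≠ j → 0 ≤ α i j)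
    (hcol : ∀ j, ∑ i ∈ univ.erase j, α i j = 1) {i j : ι} (hij : i ≠ j) : α i j ≤ 1 :=
  hcol j ▸ single_le_sum (fun k hk => hα k j (ne_of_mem_erase hk))
    (mem_erase.2 ⟨hij, mem_univ i⟩)

theorem le_sum_erase_of_eq_sum_erase_mul (hw : ∀ j, 0 ≤ w j)
    (hα : ∀ i j, i ≠ j → 0 ≤ α i j) (hcol : ∀ j, ∑ i ∈ univ.erase j, α i j = 1)
    (hfair : ∀ i, w i = ∑ j ∈ univ.erase i, α i j * w j) (i : ι) :
    w i ≤ ∑ j ∈ univ.erase i, w j := by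
  rw [hfair i]
  refine sum_le_sum fun j hj => ?_
  have hα_le : α i j ≤ 1 := le_one_of_sum_erase_eq_one hα hcol (ne_of_mem_erase hj).symm
  simpa using mul_le_mul_of_nonneg_right hα_le (hw j)

theorem exists_splitting_of_le_sum_erase (hw : ∀ j, 0 < w j)
    (hle : ∀ i, w i ≤ ∑ j ∈ univ.erase i, w j) :
    ∃ α : ι → ι → ℝ, (∀ i j, i ≠ j → 0 ≤ α i j) ∧
      (∀ j, ∑ i ∈ univ.erase j, α i j = 1) ∧ (∀ i, w i = ∑ j ∈ univ.erase i, α i j * w j) := by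
  have hsum_erase : ∀ i, ∑ j ∈ univ.erase i, w j = ∑ j, w j - w i :=
    fun i => sum_erase_eq_sub (mem_univ i)
  obtain ⟨M, hM0, hdiag, hrow, hcol⟩ := exists_matrix_zero_diag_of_two_mul_le_sum
    (fun j => (hw j).le) fun i => by linarith [hle i, hsum_erase i]
  refine ⟨fun i j => M i j / w j, fun i j _ => div_nonneg (hM0 i j) (hw j).le, fun j => ?_,
    fun i => ?_⟩
  · rw [← sum_div, sum_erase_eq_sub (mem_univ j), hcol j, hdiag j, sub_zero,
      div_self (hw j).ne']
  · rw [sum_congr rfl fun j _ => div_mul_cancel₀ (M i j) (hw j).ne',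
      sum_erase_eq_sub (mem_univ i), hrow i, hdiag i, sub_zero]

end SplittingFractions

theorem stmt_8_general
    (n : ℕ)
    (w : Fin n → ℝ)
    (hwpos : ∀ j, 0 < w j) :
    (∃ α : Fin n → Fin n → ℝ,
        (∀ i j, i ≠ j → 0 ≤ α i j) ∧
        (∀ j, ∑ i ∈ Finset.univ.erase j, α i j = 1) ∧
        (∀ i, w i = ∑ j ∈ Finset.univ.erase i, α i j * w j)) ↔
      ∀ i, w i ≤ ∑ j ∈ Finset.univ.erase i, w j :=
  ⟨fun ⟨_, hα, hcol, hfair⟩ =>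
    le_sum_erase_of_eq_sum_erase_mul (fun j => (hwpos j).le) hα hcol hfair,
    exists_splitting_of_le_sum_erase hwpos⟩

/-- One-period fairness with properness: non-negative splitting fractions with unit
column sums satisfying the periodic fairness condition exist iff no participant's
expected forfeited balance exceeds the sum of the others'. -/
theorem stmt_8 {Ω : Type*} [MeasureSpace Ω]
    [IsProbabilityMeasure (ℙ : Measure Ω)]
    (n : ℕ) (hn : 2 ≤ n)
    (D : Ω → Fin n) (hD : Measurable D)
    (hp : ∀ j, 0 < ℙ {ω | D ω = j})
    (B : Fin n → Ω → ℝ) (hB : ∀ j, Integrable (B j) ℙ)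
    (w : Fin n → ℝ)
    (hw : ∀ j, w j = ∫ ω, Set.indicator {ω' | D ω' = j} (B j) ω ∂ℙ)
    (hwpos : ∀ j, 0 < w j) :
    (∃ α : Fin n → Fin n → ℝ,
        (∀ i j, i ≠ j → 0 ≤ α i j) ∧
        (∀ j, ∑ i ∈ Finset.univ.erase j, α i j = 1) ∧
        (∀ i, w i = ∑ j ∈ Finset.univ.erase i, α i j * w j)) ↔
      ∀ i, w i ≤ ∑ j ∈ Finset.univ.erase i, w j :=
  stmt_8_general n w hwpos
end

section
/- Let δ ≥ 0, γ ∈ (0, 1), and let p : [0,∞) → (0, 1] be measurable with 0 < I := ∫_0^∞ e^{−δu} p(u)^{1/γ} du < ∞. Then for every measurable function r : [0,∞) → [0,∞) with ∫_0^∞ e^{−δu} r(u) du ≤ 1, one has ∫_0^∞ e^{−δu} p(u) · r(u)^{1−γ}/(1−γ) du ≤ I^γ/(1−γ), and equality holds for the payout function r*(u) := p(u)^{1/γ}/I, which also satisfies ∫_0^∞ e^{−δu} r*(u) du = 1. -/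
/-!
Write `e u = exp (-δ u)`. Pointwise `e p r^(1-γ) = (e r)^(1-γ) (e p^(1/γ))^γ`, so Hölder's
inequality with the exponents `1 - γ` and `γ`, which sum to one, bounds the expected utility by
`(∫ e r)^(1-γ) I^γ ≤ I^γ`. Equality in Hölder holds when `e r` is proportional to `e p^(1/γ)`,
and `r* = p^(1/γ) / I` is the multiple that spends the whole budget.
-/

open MeasureTheory

theorem integral_rpow_mul_rpow_le {α : Type*} [MeasurableSpace α] {μ : Measure α}
    {f g : α → ℝ} {a b : ℝ} (hf : 0 ≤ᵐ[μ] f) (hg : 0 ≤ᵐ[μ] g)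
    (hfi : Integrable f μ) (hgi : Integrable g μ) (ha : 0 ≤ a) (hb : 0 ≤ b) (hab : a + b = 1) :
    ∫ x, f x ^ a * g x ^ b ∂μ ≤ (∫ x, f x ∂μ) ^ a * (∫ x, g x ∂μ) ^ b := by
  have hofReal : (fun x => ENNReal.ofReal (f x ^ a * g x ^ b))
      =ᵐ[μ] fun x => ENNReal.ofReal (f x) ^ a * ENNReal.ofReal (g x) ^ b := by
    filter_upwards [hf, hg] with x hfx hgx
    rw [ENNReal.ofReal_mul (Real.rpow_nonneg hfx a), ENNReal.ofReal_rpow_of_nonneg hfx ha,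
      ENNReal.ofReal_rpow_of_nonneg hgx hb]
  have hprod_nonneg : 0 ≤ᵐ[μ] fun x => f x ^ a * g x ^ b := by
    filter_upwards [hf, hg] with x hfx hgx
    exact mul_nonneg (Real.rpow_nonneg hfx a) (Real.rpow_nonneg hgx b)
  have hprod_meas : AEStronglyMeasurable (fun x => f x ^ a * g x ^ b) μ :=
    ((hfi.aemeasurable.pow_const a).mul (hgi.aemeasurable.pow_const b)).aestronglyMeasurable
  rw [integral_eq_lintegral_of_nonneg_ae hprod_nonneg hprod_meas,
    integral_eq_lintegral_of_nonneg_ae hf hfi.1, integral_eq_lintegral_of_nonneg_ae hg hgi.1,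
    lintegral_congr_ae hofReal, ENNReal.toReal_rpow, ENNReal.toReal_rpow, ← ENNReal.toReal_mul]
  refine ENNReal.toReal_mono ?_ (ENNReal.lintegral_mul_norm_pow_le
    hfi.1.aemeasurable.ennreal_ofReal hgi.1.aemeasurable.ennreal_ofReal ha hb hab)
  exact ENNReal.mul_ne_top (ENNReal.rpow_ne_top_of_nonneg ha hfi.lintegral_lt_top.ne)
    (ENNReal.rpow_ne_top_of_nonneg hb hgi.lintegral_lt_top.ne)

theorem integrable_and_integral_le_one_of_lintegral_ofReal_le_one {α : Type*}
    [MeasurableSpace α] {μ : Measure α} {f : α → ℝ} (hf : 0 ≤ᵐ[μ] f)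
    (hfm : AEStronglyMeasurable f μ)
    (h : ∫⁻ x, ENNReal.ofReal (f x) ∂μ ≤ 1) : Integrable f μ ∧ ∫ x, f x ∂μ ≤ 1 := by
  refine ⟨⟨hfm, (hasFiniteIntegral_iff_ofReal hf).2 (h.trans_lt ENNReal.one_lt_top)⟩, ?_⟩
  rw [integral_eq_lintegral_of_nonneg_ae hf hfm]
  exact ENNReal.toReal_le_of_le_ofReal zero_le_one (h.trans ENNReal.ofReal_one.ge)

theorem mul_mul_rpow_one_sub_eq {e p r γ : ℝ} (he : 0 ≤ e) (hp : 0 ≤ p) (hr : 0 ≤ r)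
    (hγ : γ ≠ 0) : e * p * r ^ (1 - γ) = (e * r) ^ (1 - γ) * (e * p ^ (1 / γ)) ^ γ := by
  have he_split : e ^ (1 - γ) * e ^ γ = e := by
    rw [← Real.rpow_add' he (by simp), sub_add_cancel, Real.rpow_one]
  rw [Real.mul_rpow he hr, Real.mul_rpow he (Real.rpow_nonneg hp _), ← Real.rpow_mul hp,
    one_div_mul_cancel hγ, Real.rpow_one]
  linear_combination -(p * r ^ (1 - γ)) * he_split

theorem div_rpow_one_sub_mul_rpow {q c γ : ℝ} (hq : 0 ≤ q) (hc : 0 ≤ c) :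
    (q / c) ^ (1 - γ) * q ^ γ = q / c ^ (1 - γ) := by
  rw [Real.div_rpow hq hc, div_mul_eq_mul_div, ← Real.rpow_add' hq (by simp), sub_add_cancel,
    Real.rpow_one]

theorem div_rpow_one_sub_self {x γ : ℝ} (hx : 0 < x) : x / x ^ (1 - γ) = x ^ γ := by
  nth_rewrite 1 [← Real.rpow_one x]
  rw [← Real.rpow_sub hx, sub_sub_cancel]

section Utility

variable {α : Type*} [MeasurableSpace α] {μ : Measure α} {e p r : α → ℝ} {γ : ℝ}

theorem integral_mul_mul_rpow_le (he : 0 ≤ᵐ[μ] e) (hp : 0 ≤ᵐ[μ] p) (hr : 0 ≤ᵐ[μ] r)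
    (hγ0 : 0 < γ) (hγ1 : γ ≤ 1) (her : Integrable (fun x => e x * r x) μ)
    (hbudget : ∫ x, e x * r x ∂μ ≤ 1) (hep : Integrable (fun x => e x * p x ^ (1 / γ)) μ) :
    ∫ x, e x * p x * r x ^ (1 - γ) ∂μ ≤ (∫ x, e x * p x ^ (1 / γ) ∂μ) ^ γ := by
  have her_nonneg : 0 ≤ᵐ[μ] fun x => e x * r x := by
    filter_upwards [he, hr] with x hex hrx
    exact mul_nonneg hex hrx
  have hep_nonneg : 0 ≤ᵐ[μ] fun x => e x * p x ^ (1 / γ) := by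
    filter_upwards [he, hp] with x hex hpx
    exact mul_nonneg hex (Real.rpow_nonneg hpx _)
  calc ∫ x, e x * p x * r x ^ (1 - γ) ∂μ
      = ∫ x, (e x * r x) ^ (1 - γ) * (e x * p x ^ (1 / γ)) ^ γ ∂μ := by
        refine integral_congr_ae ?_
        filter_upwards [he, hp, hr] with x hex hpx hrx
        exact mul_mul_rpow_one_sub_eq hex hpx hrx hγ0.ne'
    _ ≤ (∫ x, e x * r x ∂μ) ^ (1 - γ) * (∫ x, e x * p x ^ (1 / γ) ∂μ) ^ γ :=
        integral_rpow_mul_rpow_le her_nonneg hep_nonneg her hep (sub_nonneg.2 hγ1) hγ0.le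
          (sub_add_cancel 1 γ)
    _ ≤ 1 ^ (1 - γ) * (∫ x, e x * p x ^ (1 / γ) ∂μ) ^ γ := by
        gcongr
        · exact Real.rpow_nonneg (integral_nonneg_of_ae hep_nonneg) γ
        · exact integral_nonneg_of_ae her_nonneg
    _ = (∫ x, e x * p x ^ (1 / γ) ∂μ) ^ γ := by rw [Real.one_rpow, one_mul]

theorem integral_mul_mul_div_rpow_eq (he : 0 ≤ᵐ[μ] e) (hp : 0 ≤ᵐ[μ] p) (hγ : γ ≠ 0)
    (hI : 0 < ∫ x, e x * p x ^ (1 / γ) ∂μ) :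
    ∫ x, e x * p x * (p x ^ (1 / γ) / ∫ y, e y * p y ^ (1 / γ) ∂μ) ^ (1 - γ) ∂μ
      = (∫ x, e x * p x ^ (1 / γ) ∂μ) ^ γ := by
  set I := ∫ x, e x * p x ^ (1 / γ) ∂μ
  calc ∫ x, e x * p x * (p x ^ (1 / γ) / I) ^ (1 - γ) ∂μ
      = ∫ x, e x * p x ^ (1 / γ) / I ^ (1 - γ) ∂μ := by
        refine integral_congr_ae ?_
        filter_upwards [he, hp] with x hex hpx
        rw [mul_mul_rpow_one_sub_eq hex hpx (div_nonneg (Real.rpow_nonneg hpx _) hI.le) hγ,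
          mul_div_assoc', div_rpow_one_sub_mul_rpow (mul_nonneg hex (Real.rpow_nonneg hpx _)) hI.le]
    _ = I ^ γ := by rw [integral_div, div_rpow_one_sub_self hI]

end Utility

theorem stmt_9_general (δ γ : ℝ) (hγ0 : 0 < γ) (hγ1 : γ < 1)
    (p : ℝ → ℝ)
    (hp : ∀ u, 0 ≤ u → 0 < p u ∧ p u ≤ 1)
    (I : ℝ) (hI : I = ∫ u in Set.Ioi (0:ℝ), Real.exp (-δ*u) * p u ^ (1/γ))
    (hI_int : IntegrableOn (fun u => Real.exp (-δ*u) * p u ^ (1/γ)) (Set.Ioi 0))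
    (hIpos : 0 < I) :
    (∀ r : ℝ → ℝ, Measurable r → (∀ u, 0 ≤ r u) →
      (∫⁻ u in Set.Ioi (0:ℝ), ENNReal.ofReal (Real.exp (-δ*u) * r u)) ≤ 1 →
      (∫ u in Set.Ioi (0:ℝ), Real.exp (-δ*u) * p u * r u ^ (1-γ) / (1-γ))
        ≤ I ^ γ / (1-γ)) ∧
    (∫ u in Set.Ioi (0:ℝ), Real.exp (-δ*u) * p u * (p u ^ (1/γ) / I) ^ (1-γ) / (1-γ))
      = I ^ γ / (1-γ) ∧
    (∫ u in Set.Ioi (0:ℝ), Real.exp (-δ*u) * (p u ^ (1/γ) / I)) = 1 := by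
  subst hI
  have he : 0 ≤ᵐ[volume.restrict (Set.Ioi 0)] fun u : ℝ => Real.exp (-δ*u) :=
    ae_of_all _ fun u => Real.exp_nonneg _
  have hp0 : 0 ≤ᵐ[volume.restrict (Set.Ioi 0)] p :=
    (ae_restrict_mem measurableSet_Ioi).mono fun u hu => (hp u (le_of_lt hu)).1.le
  refine ⟨fun r hr hr0 hbudget => ?_, ?_, ?_⟩
  · obtain ⟨her, hspent⟩ := integrable_and_integral_le_one_of_lintegral_ofReal_le_one
      (ae_of_all _ fun u => mul_nonneg (Real.exp_nonneg _) (hr0 u))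
      (by fun_prop : Measurable fun u => Real.exp (-δ*u) * r u).aestronglyMeasurable hbudget
    rw [integral_div]
    gcongr
    exact integral_mul_mul_rpow_le he hp0 (ae_of_all _ hr0) hγ0 hγ1.le her hspent hI_int
  · rw [integral_div, integral_mul_mul_div_rpow_eq he hp0 hγ0.ne' hIpos]
  · simp_rw [mul_div_assoc']
    rw [integral_div, div_self hIpos.ne']

/-- Optimal payout function under a budget constraint: expected discounted CRRA utility
is at most `I^γ/(1-γ)` for any admissible payout function, with equality for
`r*(u) = p(u)^{1/γ}/I`, which spends the whole budget. -/
theorem stmt_9 (δ γ : ℝ) (hδ : 0 ≤ δ) (hγ0 : 0 < γ) (hγ1 : γ < 1)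
    (p : ℝ → ℝ) (hp_meas : Measurable p)
    (hp : ∀ u, 0 ≤ u → 0 < p u ∧ p u ≤ 1)
    (I : ℝ) (hI : I = ∫ u in Set.Ioi (0:ℝ), Real.exp (-δ*u) * p u ^ (1/γ))
    (hI_int : IntegrableOn (fun u => Real.exp (-δ*u) * p u ^ (1/γ)) (Set.Ioi 0))
    (hIpos : 0 < I) :
    (∀ r : ℝ → ℝ, Measurable r → (∀ u, 0 ≤ r u) →
      (∫⁻ u in Set.Ioi (0:ℝ), ENNReal.ofReal (Real.exp (-δ*u) * r u)) ≤ 1 →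
      (∫ u in Set.Ioi (0:ℝ), Real.exp (-δ*u) * p u * r u ^ (1-γ) / (1-γ))
        ≤ I ^ γ / (1-γ)) ∧
    (∫ u in Set.Ioi (0:ℝ), Real.exp (-δ*u) * p u * (p u ^ (1/γ) / I) ^ (1-γ) / (1-γ))
      = I ^ γ / (1-γ) ∧
    (∫ u in Set.Ioi (0:ℝ), Real.exp (-δ*u) * (p u ^ (1/γ) / I)) = 1 :=
  stmt_9_general δ γ hγ0 hγ1 p hp I hI hI_int hIpos
end

section
/- Let δ ≥ 0, Λ > 0, and γ ∈ (0, 1). Then for every measurable function r : [0,∞) → [0,∞) with ∫_0^∞ e^{−δu} r(u) du ≤ 1, one has ∫_0^∞ e^{−δu} e^{−Λu} · r(u)^{1−γ}/(1−γ) du ≤ (δ + Λ/γ)^{−γ}/(1−γ), and equality holds for r*(u) := (δ + Λ/γ) e^{−(Λ/γ) u}, which satisfies ∫_0^∞ e^{−δu} r*(u) du = 1. -/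
open MeasureTheory

lemma expInt10 {c : ℝ} (hc : 0 < c) :
    (∫ t in Set.Ioi (0:ℝ), Real.exp (-(c*t))) = 1/c := by
  have h := Real.integral_rpow_mul_exp_neg_mul_Ioi (a := 1) one_pos hc
  simpa [Real.Gamma_one] using h

/-- Optimal payout function with constant total force of mortality `Λ`: expected
discounted CRRA utility is at most `(δ + Λ/γ)^{-γ}/(1-γ)` for any admissible payout
function, with equality for `r*(u) = (δ + Λ/γ) e^{-(Λ/γ)u}`, which spends the whole
budget. -/
theorem stmt_10 (δ Λ γ : ℝ) (hδ : 0 ≤ δ) (hΛ : 0 < Λ) (hγ0 : 0 < γ) (hγ1 : γ < 1) :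
    (∀ r : ℝ → ℝ, Measurable r → (∀ u, 0 ≤ r u) →
      (∫⁻ u in Set.Ioi (0:ℝ), ENNReal.ofReal (Real.exp (-δ*u) * r u)) ≤ 1 →
      (∫ u in Set.Ioi (0:ℝ), Real.exp (-δ*u) * Real.exp (-Λ*u) * r u ^ (1-γ) / (1-γ))
        ≤ (δ + Λ/γ) ^ (-γ) / (1-γ)) ∧
    (∫ u in Set.Ioi (0:ℝ), Real.exp (-δ*u) * Real.exp (-Λ*u)
        * ((δ + Λ/γ) * Real.exp (-(Λ/γ)*u)) ^ (1-γ) / (1-γ))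
      = (δ + Λ/γ) ^ (-γ) / (1-γ) ∧
    (∫ u in Set.Ioi (0:ℝ), Real.exp (-δ*u) * ((δ + Λ/γ) * Real.exp (-(Λ/γ)*u))) = 1 := by
  set A : ℝ := δ + Λ/γ with hAdef
  have hA : 0 < A := by positivity
  have hγ1' : 0 < 1 - γ := by linarith
  -- integrability of e^{-Au}
  have hgi : IntegrableOn (fun u : ℝ => Real.exp (-(A*u))) (Set.Ioi 0) := by
    simpa [neg_mul] using exp_neg_integrableOn_Ioi 0 hA
  have hgint : (∫ u in Set.Ioi (0:ℝ), Real.exp (-(A*u))) = 1/A := expInt10 hA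
  have hApow : A ^ (1-γ) / A = A ^ (-γ) := by
    rw [show (1-γ) = -γ + 1 by ring, Real.rpow_add_one hA.ne', mul_div_assoc,
      div_self hA.ne', mul_one]
  refine ⟨?_, ?_, ?_⟩
  · intro r hrm hr0 hbudget
    set f : ℝ → ℝ := fun u => Real.exp (-δ*u) * r u with hfdef
    have hf0 : ∀ u, 0 ≤ f u := fun u => mul_nonneg (Real.exp_pos _).le (hr0 u)
    have hfm : Measurable f :=
      (Real.measurable_exp.comp (measurable_const.mul measurable_id)).mul hrm
    have hfi : IntegrableOn f (Set.Ioi 0) := by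
      rw [IntegrableOn, ← lintegral_ofReal_ne_top_iff_integrable
        (hfm.aestronglyMeasurable) (Filter.Eventually.of_forall hf0)]
      exact ne_top_of_le_ne_top ENNReal.one_ne_top hbudget
    have hfle : (∫ u in Set.Ioi (0:ℝ), f u) ≤ 1 := by
      rw [integral_eq_lintegral_of_nonneg_ae (Filter.Eventually.of_forall hf0)
        hfm.aestronglyMeasurable]
      refine ENNReal.toReal_le_of_le_ofReal zero_le_one ?_
      rw [ENNReal.ofReal_one]; exact hbudget
    set B : ℝ → ℝ := fun u => A^(1-γ) * ((1-γ) * (f u / A) + γ * Real.exp (-(A*u))) with hBdef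
    have hBi : IntegrableOn B (Set.Ioi 0) :=
      (((hfi.div_const A).const_mul (1-γ)).add (hgi.const_mul γ)).const_mul _
    have hpt : ∀ u, Real.exp (-δ*u) * Real.exp (-Λ*u) * r u ^ (1-γ) ≤ B u := by
      intro u
      have hgm := Real.geom_mean_le_arith_mean2_weighted hγ1'.le hγ0.le
        (div_nonneg (hf0 u) hA.le) (Real.exp_pos (-(A*u))).le (by ring)
      have e1 : (f u / A) ^ (1-γ) = Real.exp (-δ*u*(1-γ)) * r u ^ (1-γ) / A^(1-γ) := by
        rw [Real.div_rpow (hf0 u) hA.le, hfdef,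
          Real.mul_rpow (Real.exp_pos _).le (hr0 u), ← Real.exp_mul]
      have e2 : Real.exp (-(A*u)) ^ γ = Real.exp (-(A*u)*γ) := (Real.exp_mul _ _).symm
      have e3 : Real.exp (-δ*u*(1-γ)) * Real.exp (-(A*u)*γ)
          = Real.exp (-δ*u) * Real.exp (-Λ*u) := by
        rw [← Real.exp_add, ← Real.exp_add]
        congr 1
        rw [hAdef]; field_simp; ring
      have key : (f u / A) ^ (1-γ) * Real.exp (-(A*u)) ^ γ
          = Real.exp (-δ*u) * Real.exp (-Λ*u) * r u ^ (1-γ) / A ^ (1-γ) := by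
        rw [e1, e2, div_mul_eq_mul_div]
        congr 1
        rw [mul_right_comm, e3]
      have hstep : Real.exp (-δ*u) * Real.exp (-Λ*u) * r u ^ (1-γ) / A ^ (1-γ)
          ≤ (1-γ) * (f u / A) + γ * Real.exp (-(A*u)) := key ▸ hgm
      have hApos : (0:ℝ) < A ^ (1-γ) := Real.rpow_pos_of_pos hA _
      calc Real.exp (-δ*u) * Real.exp (-Λ*u) * r u ^ (1-γ)
          = A^(1-γ) * (Real.exp (-δ*u) * Real.exp (-Λ*u) * r u ^ (1-γ) / A ^ (1-γ)) := by
            field_simp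
        _ ≤ B u := mul_le_mul_of_nonneg_left hstep hApos.le
    have hmono : (∫ u in Set.Ioi (0:ℝ), Real.exp (-δ*u) * Real.exp (-Λ*u) * r u ^ (1-γ))
        ≤ ∫ u in Set.Ioi (0:ℝ), B u := by
      refine integral_mono_of_nonneg (Filter.Eventually.of_forall fun u => ?_) hBi
        (Filter.Eventually.of_forall hpt)
      exact mul_nonneg (mul_nonneg (Real.exp_pos _).le (Real.exp_pos _).le)
        (Real.rpow_nonneg (hr0 u) _)
    have hBval : (∫ u in Set.Ioi (0:ℝ), B u)
        = A^(1-γ) * ((1-γ) * ((∫ u in Set.Ioi (0:ℝ), f u) / A) + γ * (1/A)) := by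
      simp only [hBdef]
      rw [integral_const_mul,
        integral_add ((hfi.div_const A).const_mul (1-γ)) (hgi.const_mul γ),
        integral_const_mul, integral_const_mul, integral_div, hgint]
    have hBle : (∫ u in Set.Ioi (0:ℝ), B u) ≤ A ^ (-γ) := by
      rw [hBval, ← hApow]
      have h1 : (1-γ) * ((∫ u in Set.Ioi (0:ℝ), f u) / A) + γ * (1/A) ≤ 1/A := by
        have h2 : (∫ u in Set.Ioi (0:ℝ), f u) / A ≤ 1/A := by gcongr
        nlinarith
      calc A^(1-γ) * ((1-γ) * ((∫ u in Set.Ioi (0:ℝ), f u) / A) + γ * (1/A))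
          ≤ A^(1-γ) * (1/A) := mul_le_mul_of_nonneg_left h1 (Real.rpow_nonneg hA.le _)
        _ = A^(1-γ) / A := by ring
    calc (∫ u in Set.Ioi (0:ℝ), Real.exp (-δ*u) * Real.exp (-Λ*u) * r u ^ (1-γ) / (1-γ))
        = (∫ u in Set.Ioi (0:ℝ), Real.exp (-δ*u) * Real.exp (-Λ*u) * r u ^ (1-γ)) / (1-γ) :=
          integral_div _ _
      _ ≤ A ^ (-γ) / (1-γ) := by gcongr; exact hmono.trans hBle
  · -- equality case
    have hpt : ∀ u : ℝ, Real.exp (-δ*u) * Real.exp (-Λ*u)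
          * (A * Real.exp (-(Λ/γ)*u)) ^ (1-γ) / (1-γ)
        = (A^(1-γ)/(1-γ)) * Real.exp (-(A*u)) := by
      intro u
      have e3 : Real.exp (-δ*u) * Real.exp (-Λ*u) * Real.exp (-(Λ/γ)*u*(1-γ))
          = Real.exp (-(A*u)) := by
        rw [← Real.exp_add, ← Real.exp_add]
        congr 1
        rw [hAdef]; field_simp; ring
      rw [Real.mul_rpow hA.le (Real.exp_pos _).le, ← Real.exp_mul, ← e3]
      ring
    rw [MeasureTheory.setIntegral_congr_fun measurableSet_Ioi (fun u _ => hpt u),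
      integral_const_mul, hgint]
    rw [← hApow]; ring
  · have hpt : ∀ u : ℝ, Real.exp (-δ*u) * (A * Real.exp (-(Λ/γ)*u))
        = A * Real.exp (-(A*u)) := by
      intro u
      have e : Real.exp (-δ*u) * Real.exp (-(Λ/γ)*u) = Real.exp (-(A*u)) := by
        rw [← Real.exp_add]
        congr 1
        rw [hAdef]; ring
      rw [← e]; ring
    rw [MeasureTheory.setIntegral_congr_fun measurableSet_Ioi (fun u _ => hpt u),
      integral_const_mul, hgint]
    field_simp
end

section
/- Let δ ≥ 0, γ ∈ (0, 1), s > 0, and let τ be a non-negative random variable on a probability space with survival function G(t) := P(τ > t), and suppose 0 < I := ∫_0^∞ e^{−δu} G(u)^{1/γ} du < ∞. Then for every measurable drawdown function c : [0,∞) → [0,∞) with ∫_0^∞ e^{−δt} c(t) dt ≤ s, one has E[∫_0^τ e^{−δu} c(u)^{1−γ}/(1−γ) du] ≤ s^{1−γ} I^γ/(1−γ), and equality holds for c*(t) := (s/I) G(t)^{1/γ}, which satisfies ∫_0^∞ e^{−δt} c*(t) dt = s. -/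
open MeasureTheory
open scoped ProbabilityTheory

/-- Optimal drawdown in a self-managed DC plan: for any drawdown whose present value
does not exceed the principal `s`, the expected discounted lifetime CRRA utility is at
most `s^{1-γ} I^γ/(1-γ)`, with equality for `c*(t) = (s/I) G(t)^{1/γ}`, which spends
the whole principal. -/
theorem stmt_12 {Ω : Type*} [MeasureSpace Ω]
    [IsProbabilityMeasure (ℙ : Measure Ω)]
    (δ γ s : ℝ) (hδ : 0 ≤ δ) (hγ0 : 0 < γ) (hγ1 : γ < 1) (hs : 0 < s)
    (τ : Ω → ℝ) (hτ : Measurable τ) (hτnn : ∀ᵐ ω ∂ℙ, 0 ≤ τ ω)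
    (G : ℝ → ℝ) (hG : ∀ t, G t = (ℙ {ω | t < τ ω}).toReal)
    (I : ℝ) (hI : I = ∫ u in Set.Ioi (0:ℝ), Real.exp (-δ*u) * G u ^ (1/γ))
    (hI_int : IntegrableOn (fun u => Real.exp (-δ*u) * G u ^ (1/γ)) (Set.Ioi 0))
    (hIpos : 0 < I) :
    (∀ c : ℝ → ℝ, Measurable c → (∀ u, 0 ≤ c u) →
      (∫⁻ t in Set.Ioi (0:ℝ), ENNReal.ofReal (Real.exp (-δ*t) * c t))
        ≤ ENNReal.ofReal s →
      (∫ ω, (∫ u in (0:ℝ)..τ ω, Real.exp (-δ*u) * c u ^ (1-γ) / (1-γ)) ∂ℙ)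
        ≤ s ^ (1-γ) * I ^ γ / (1-γ)) ∧
    (∫ ω, (∫ u in (0:ℝ)..τ ω,
        Real.exp (-δ*u) * ((s/I) * G u ^ (1/γ)) ^ (1-γ) / (1-γ)) ∂ℙ)
      = s ^ (1-γ) * I ^ γ / (1-γ) ∧
    (∫ t in Set.Ioi (0:ℝ), Real.exp (-δ*t) * ((s/I) * G t ^ (1/γ))) = s := by
  have hγne : γ ≠ 0 := hγ0.ne'
  have h1γ : (0:ℝ) < 1 - γ := by linarith
  have hG0 : ∀ u, 0 ≤ G u := fun u => (hG u) ▸ ENNReal.toReal_nonneg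
  have hG1 : ∀ u, G u ≤ 1 := by
    intro u; rw [hG u]
    exact ENNReal.toReal_le_of_le_ofReal zero_le_one (by simpa using prob_le_one)
  have hGanti : Antitone G := by
    intro a b hab
    rw [hG a, hG b]
    exact ENNReal.toReal_mono (measure_ne_top _ _)
      (measure_mono fun ω hω => lt_of_le_of_lt hab hω)
  have hGmeas : Measurable G := hGanti.measurable
  have hGofReal : ∀ u, ENNReal.ofReal (G u) = ℙ {ω | u < τ ω} := fun u => by
    rw [hG u, ENNReal.ofReal_toReal (measure_ne_top _ _)]
  -- the key Tonelli/swap lemma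
  have key : ∀ h : ℝ → ℝ, Measurable h →
      (∫⁻ ω, (∫⁻ u in Set.Ioo 0 (τ ω), ENNReal.ofReal (h u)) ∂ℙ)
        = ∫⁻ u in Set.Ioi (0:ℝ), ENNReal.ofReal (h u) * ENNReal.ofReal (G u) := by
    intro h hh
    have hsetmeas : MeasurableSet {p : Ω × ℝ | 0 < p.2 ∧ p.2 < τ p.1} :=
      (measurableSet_lt measurable_const measurable_snd).inter
        (measurableSet_lt measurable_snd (hτ.comp measurable_fst))
    have hfun : Measurable fun p : Ω × ℝ =>
        Set.indicator {p : Ω × ℝ | 0 < p.2 ∧ p.2 < τ p.1}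
          (fun p => ENNReal.ofReal (h p.2)) p :=
      ((ENNReal.measurable_ofReal.comp hh).comp measurable_snd).indicator hsetmeas
    have e1 : ∀ ω, (∫⁻ u in Set.Ioo 0 (τ ω), ENNReal.ofReal (h u))
        = ∫⁻ u, Set.indicator {p : Ω × ℝ | 0 < p.2 ∧ p.2 < τ p.1}
            (fun p => ENNReal.ofReal (h p.2)) (ω, u) := by
      intro ω
      rw [← lintegral_indicator measurableSet_Ioo]
      apply lintegral_congr
      intro u
      simp only [Set.indicator_apply, Set.mem_Ioo, Set.mem_setOf_eq]
    calc (∫⁻ ω, (∫⁻ u in Set.Ioo 0 (τ ω), ENNReal.ofReal (h u)) ∂ℙ)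
        = ∫⁻ ω, ∫⁻ u, Set.indicator {p : Ω × ℝ | 0 < p.2 ∧ p.2 < τ p.1}
            (fun p => ENNReal.ofReal (h p.2)) (ω, u) ∂ℙ := by
          exact lintegral_congr e1
      _ = ∫⁻ u, ∫⁻ ω, Set.indicator {p : Ω × ℝ | 0 < p.2 ∧ p.2 < τ p.1}
            (fun p => ENNReal.ofReal (h p.2)) (ω, u) ∂ℙ := by
          exact lintegral_lintegral_swap hfun.aemeasurable
      _ = ∫⁻ u, Set.indicator (Set.Ioi (0:ℝ))
            (fun u => ENNReal.ofReal (h u) * ENNReal.ofReal (G u)) u := by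
          apply lintegral_congr
          intro u
          by_cases hu : 0 < u
          · rw [Set.indicator_of_mem (Set.mem_Ioi.mpr hu)]
            have : ∀ ω, Set.indicator {p : Ω × ℝ | 0 < p.2 ∧ p.2 < τ p.1}
                (fun p => ENNReal.ofReal (h p.2)) (ω, u)
                = Set.indicator {ω | u < τ ω} (fun _ => ENNReal.ofReal (h u)) ω := by
              intro ω
              simp only [Set.indicator_apply, Set.mem_setOf_eq, hu, true_and]
            rw [lintegral_congr this,
              lintegral_indicator_const (measurableSet_lt measurable_const hτ),
              hGofReal u]
          · have : ∀ ω, Set.indicator {p : Ω × ℝ | 0 < p.2 ∧ p.2 < τ p.1}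
                (fun p => ENNReal.ofReal (h p.2)) (ω, u) = 0 := by
              intro ω
              simp only [Set.indicator_apply, Set.mem_setOf_eq, hu, false_and, if_false]
            rw [lintegral_congr this, lintegral_zero,
              Set.indicator_of_notMem (by simpa using hu)]
      _ = ∫⁻ u in Set.Ioi (0:ℝ), ENNReal.ofReal (h u) * ENNReal.ofReal (G u) :=
          lintegral_indicator measurableSet_Ioi _
  -- a.e.-strong measurability of the random inner integral
  have hSM : ∀ g : ℝ → ℝ, Measurable g →
      AEStronglyMeasurable (fun ω => ∫ u in (0:ℝ)..τ ω, g u) ℙ := by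
    intro g hg
    have hsetmeas : MeasurableSet {p : Ω × ℝ | 0 < p.2 ∧ p.2 ≤ τ p.1} :=
      (measurableSet_lt measurable_const measurable_snd).inter
        (measurableSet_le measurable_snd (hτ.comp measurable_fst))
    have huncur : StronglyMeasurable fun p : Ω × ℝ => (Set.Ioc 0 (τ p.1)).indicator g p.2 := by
      have : (fun p : Ω × ℝ => (Set.Ioc 0 (τ p.1)).indicator g p.2)
          = Set.indicator {p : Ω × ℝ | 0 < p.2 ∧ p.2 ≤ τ p.1} (fun p => g p.2) := by
        ext p
        simp only [Set.indicator_apply, Set.mem_Ioc, Set.mem_setOf_eq]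
      rw [this]
      exact ((hg.comp measurable_snd).indicator hsetmeas).stronglyMeasurable
    have hker : StronglyMeasurable fun ω => ∫ u, (Set.Ioc 0 (τ ω)).indicator g u :=
      huncur.integral_prod_right'
    refine ⟨_, hker, ?_⟩
    filter_upwards [hτnn] with ω hω
    rw [intervalIntegral.integral_of_le hω, ← integral_indicator measurableSet_Ioc]
  -- upper bound version
  have repLE : ∀ g : ℝ → ℝ, Measurable g → (∀ u, 0 ≤ g u) → ∀ M : ℝ, 0 ≤ M →
      (∫⁻ u in Set.Ioi (0:ℝ), ENNReal.ofReal (g u) * ENNReal.ofReal (G u))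
        ≤ ENNReal.ofReal M →
      (∫ ω, (∫ u in (0:ℝ)..τ ω, g u) ∂ℙ) ≤ M := by
    intro g hg hgnn M hM hbound
    have hnonneg : 0 ≤ᵐ[ℙ] fun ω => ∫ u in (0:ℝ)..τ ω, g u := by
      filter_upwards [hτnn] with ω hω
      exact intervalIntegral.integral_nonneg hω fun u _ => hgnn u
    rw [integral_eq_lintegral_of_nonneg_ae hnonneg (hSM g hg)]
    apply ENNReal.toReal_le_of_le_ofReal hM
    calc (∫⁻ ω, ENNReal.ofReal (∫ u in (0:ℝ)..τ ω, g u) ∂ℙ)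
        ≤ ∫⁻ ω, (∫⁻ u in Set.Ioo 0 (τ ω), ENNReal.ofReal (g u)) ∂ℙ := by
          apply lintegral_mono_ae
          filter_upwards [hτnn] with ω hω
          rw [intervalIntegral.integral_of_le hω,
            Measure.restrict_congr_set Ioo_ae_eq_Ioc]
          by_cases hint : IntegrableOn g (Set.Ioc 0 (τ ω))
          · rw [← ofReal_integral_eq_lintegral_ofReal hint (ae_of_all _ hgnn)]
          · rw [integral_undef hint]; simp
      _ = ∫⁻ u in Set.Ioi (0:ℝ), ENNReal.ofReal (g u) * ENNReal.ofReal (G u) := key g hg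
      _ ≤ ENNReal.ofReal M := hbound
  -- equality version (for integrable-on-bounded-intervals g)
  have repEQ : ∀ g : ℝ → ℝ, Measurable g → (∀ u, 0 ≤ g u) →
      (∀ T : ℝ, 0 ≤ T → IntegrableOn g (Set.Ioc 0 T)) →
      (∫ ω, (∫ u in (0:ℝ)..τ ω, g u) ∂ℙ)
        = (∫⁻ u in Set.Ioi (0:ℝ), ENNReal.ofReal (g u) * ENNReal.ofReal (G u)).toReal := by
    intro g hg hgnn hint
    have hnonneg : 0 ≤ᵐ[ℙ] fun ω => ∫ u in (0:ℝ)..τ ω, g u := by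
      filter_upwards [hτnn] with ω hω
      exact intervalIntegral.integral_nonneg hω fun u _ => hgnn u
    rw [integral_eq_lintegral_of_nonneg_ae hnonneg (hSM g hg)]
    congr 1
    rw [← key g hg]
    apply lintegral_congr_ae
    filter_upwards [hτnn] with ω hω
    rw [intervalIntegral.integral_of_le hω,
      Measure.restrict_congr_set Ioo_ae_eq_Ioc,
      ← ofReal_integral_eq_lintegral_ofReal (hint _ hω) (ae_of_all _ hgnn)]
  -- the value of ∫⁻ e^{-δu} G^{1/γ} on (0,∞)
  have hIlin : (∫⁻ u in Set.Ioi (0:ℝ),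
      ENNReal.ofReal (Real.exp (-δ*u) * G u ^ (1/γ))) = ENNReal.ofReal I := by
    rw [hI, ofReal_integral_eq_lintegral_ofReal hI_int]
    exact ae_of_all _ fun u => mul_nonneg (Real.exp_pos _).le (Real.rpow_nonneg (hG0 u) _)
  refine ⟨?_, ?_, ?_⟩
  · -- Part 1: the Hölder bound
    intro c hc hcnn hbudget
    have hMnn : (0:ℝ) ≤ s ^ (1-γ) * I ^ γ / (1-γ) := by positivity
    have hgm : Measurable fun u => Real.exp (-δ*u) * c u ^ (1-γ) / (1-γ) := by
      apply Measurable.div_const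
      exact (by fun_prop : Measurable fun u => Real.exp (-δ*u)).mul
        ((Real.continuous_rpow_const h1γ.le).measurable.comp hc)
    apply repLE _ hgm (fun u => div_nonneg (mul_nonneg (Real.exp_pos _).le
      (Real.rpow_nonneg (hcnn u) _)) h1γ.le) _ hMnn
    -- key Hölder estimate
    have hpq : Real.HolderConjugate (1/(1-γ)) (1/γ) := by
      rw [Real.holderConjugate_iff]
      constructor
      · exact one_lt_one_div h1γ (by linarith)
      · rw [one_div, one_div, inv_inv, inv_inv]; ring
    set φ : ℝ → ENNReal := fun u => ENNReal.ofReal (Real.exp (-δ*u) * c u) ^ (1-γ) with hφ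
    set ψ : ℝ → ENNReal := fun u => ENNReal.ofReal (Real.exp (-δ*u) * G u ^ (1/γ)) ^ γ with hψ
    have hφm : AEMeasurable φ (volume.restrict (Set.Ioi (0:ℝ))) := by
      apply Measurable.aemeasurable
      exact (ENNReal.continuous_rpow_const.measurable).comp
        (ENNReal.measurable_ofReal.comp (by fun_prop))
    have hψm : AEMeasurable ψ (volume.restrict (Set.Ioi (0:ℝ))) := by
      apply Measurable.aemeasurable
      apply (ENNReal.continuous_rpow_const.measurable).comp
      apply ENNReal.measurable_ofReal.comp
      exact (by fun_prop : Measurable fun u => Real.exp (-δ*u)).mul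
        ((Real.continuous_rpow_const (one_div_pos.mpr hγ0).le).measurable.comp hGmeas)
    have hprod : ∀ u, ENNReal.ofReal (Real.exp (-δ*u) * c u ^ (1-γ))
        * ENNReal.ofReal (G u) = (φ * ψ) u := by
      intro u
      have hexp : (0:ℝ) ≤ Real.exp (-δ*u) := (Real.exp_pos _).le
      have h2 : Real.exp (-δ*u*(1-γ)) * Real.exp (-δ*u*γ) = Real.exp (-δ*u) := by
        rw [← Real.exp_add]; congr 1; ring
      simp only [hφ, hψ, Pi.mul_apply]
      rw [ENNReal.ofReal_rpow_of_nonneg (mul_nonneg hexp (hcnn u)) h1γ.le,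
        ENNReal.ofReal_rpow_of_nonneg
          (mul_nonneg hexp (Real.rpow_nonneg (hG0 u) _)) hγ0.le,
        ← ENNReal.ofReal_mul (mul_nonneg hexp (Real.rpow_nonneg (hcnn u) _)),
        ← ENNReal.ofReal_mul (Real.rpow_nonneg (mul_nonneg hexp (hcnn u)) _)]
      congr 1
      rw [Real.mul_rpow hexp (hcnn u), Real.mul_rpow hexp (Real.rpow_nonneg (hG0 u) _),
        ← Real.rpow_mul (hG0 u)]
      have h1 : 1/γ * γ = 1 := by field_simp
      rw [h1, Real.rpow_one, ← Real.exp_mul, ← Real.exp_mul, mul_mul_mul_comm, h2,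
        mul_assoc]
    have hφp : ∀ u, φ u ^ (1/(1-γ)) = ENNReal.ofReal (Real.exp (-δ*u) * c u) := by
      intro u
      rw [hφ, ← ENNReal.rpow_mul, mul_one_div, div_self h1γ.ne', ENNReal.rpow_one]
    have hψq : ∀ u, ψ u ^ (1/γ) = ENNReal.ofReal (Real.exp (-δ*u) * G u ^ (1/γ)) := by
      intro u
      rw [hψ, ← ENNReal.rpow_mul, mul_one_div, div_self hγne, ENNReal.rpow_one]
    have holder := ENNReal.lintegral_mul_le_Lp_mul_Lq
      (volume.restrict (Set.Ioi (0:ℝ))) hpq hφm hψm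
    simp only [hφp, hψq] at holder
    rw [one_div_one_div, one_div_one_div] at holder
    have hmain : (∫⁻ u in Set.Ioi (0:ℝ),
        ENNReal.ofReal (Real.exp (-δ*u) * c u ^ (1-γ)) * ENNReal.ofReal (G u))
        ≤ ENNReal.ofReal (s ^ (1-γ) * I ^ γ) := by
      calc (∫⁻ u in Set.Ioi (0:ℝ),
          ENNReal.ofReal (Real.exp (-δ*u) * c u ^ (1-γ)) * ENNReal.ofReal (G u))
          = ∫⁻ u in Set.Ioi (0:ℝ), (φ * ψ) u := by
            exact lintegral_congr fun u => hprod u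
        _ ≤ (∫⁻ u in Set.Ioi (0:ℝ), ENNReal.ofReal (Real.exp (-δ*u) * c u)) ^ (1-γ)
            * (∫⁻ u in Set.Ioi (0:ℝ),
                ENNReal.ofReal (Real.exp (-δ*u) * G u ^ (1/γ))) ^ γ := holder
        _ ≤ ENNReal.ofReal s ^ (1-γ) * ENNReal.ofReal I ^ γ := by
            gcongr
            exact hIlin.le
        _ = ENNReal.ofReal (s ^ (1-γ) * I ^ γ) := by
            rw [ENNReal.ofReal_rpow_of_pos hs, ENNReal.ofReal_rpow_of_pos hIpos,
              ← ENNReal.ofReal_mul (by positivity)]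
    -- finish: divide by (1-γ)
    calc (∫⁻ u in Set.Ioi (0:ℝ),
        ENNReal.ofReal (Real.exp (-δ*u) * c u ^ (1-γ) / (1-γ)) * ENNReal.ofReal (G u))
        = ∫⁻ u in Set.Ioi (0:ℝ), ENNReal.ofReal ((1-γ)⁻¹)
            * (ENNReal.ofReal (Real.exp (-δ*u) * c u ^ (1-γ)) * ENNReal.ofReal (G u)) := by
          apply lintegral_congr
          intro u
          rw [div_eq_mul_inv, mul_comm (Real.exp (-δ*u) * c u ^ (1-γ)) ((1-γ)⁻¹),
            ENNReal.ofReal_mul (by positivity), mul_assoc]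
      _ = ENNReal.ofReal ((1-γ)⁻¹) * ∫⁻ u in Set.Ioi (0:ℝ),
            ENNReal.ofReal (Real.exp (-δ*u) * c u ^ (1-γ)) * ENNReal.ofReal (G u) :=
          lintegral_const_mul' _ _ ENNReal.ofReal_ne_top
      _ ≤ ENNReal.ofReal ((1-γ)⁻¹) * ENNReal.ofReal (s ^ (1-γ) * I ^ γ) := by gcongr
      _ = ENNReal.ofReal (s ^ (1-γ) * I ^ γ / (1-γ)) := by
          rw [← ENNReal.ofReal_mul (by positivity)]
          congr 1
          field_simp
  · -- Part 2: equality for the optimal drawdown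
    have hsI : (0:ℝ) < s / I := by positivity
    set g : ℝ → ℝ := fun u => Real.exp (-δ*u) * ((s/I) * G u ^ (1/γ)) ^ (1-γ) / (1-γ)
      with hgdef
    have hgnn : ∀ u, 0 ≤ g u := fun u =>
      div_nonneg (mul_nonneg (Real.exp_pos _).le
        (Real.rpow_nonneg (mul_nonneg hsI.le (Real.rpow_nonneg (hG0 u) _)) _)) h1γ.le
    have hgmeas : Measurable g := by
      apply Measurable.div_const
      exact (by fun_prop : Measurable fun u => Real.exp (-δ*u)).mul
        ((Real.continuous_rpow_const h1γ.le).measurable.comp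
          (measurable_const.mul
            ((Real.continuous_rpow_const (one_div_pos.mpr hγ0).le).measurable.comp hGmeas)))
    have hint : ∀ T : ℝ, 0 ≤ T → IntegrableOn g (Set.Ioc 0 T) := by
      intro T hT
      apply Measure.integrableOn_of_bounded (M := (s/I) ^ (1-γ) / (1-γ))
        measure_Ioc_lt_top.ne hgmeas.aestronglyMeasurable
      apply ae_restrict_of_forall_mem measurableSet_Ioc
      intro u hu
      rw [Real.norm_of_nonneg (hgnn u)]
      have h0u : (0:ℝ) < u := hu.1
      have he : Real.exp (-δ*u) ≤ 1 := by
        rw [Real.exp_le_one_iff]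
        nlinarith
      have hb : ((s/I) * G u ^ (1/γ)) ^ (1-γ) ≤ (s/I) ^ (1-γ) := by
        apply Real.rpow_le_rpow
          (mul_nonneg hsI.le (Real.rpow_nonneg (hG0 u) _)) _ h1γ.le
        calc (s/I) * G u ^ (1/γ) ≤ (s/I) * 1 :=
              mul_le_mul_of_nonneg_left
                (Real.rpow_le_one (hG0 u) (hG1 u) (one_div_pos.mpr hγ0).le) hsI.le
          _ = s/I := mul_one _
      have hnum : Real.exp (-δ*u) * ((s/I) * G u ^ (1/γ)) ^ (1-γ) ≤ (s/I) ^ (1-γ) := by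
        calc Real.exp (-δ*u) * ((s/I) * G u ^ (1/γ)) ^ (1-γ)
            ≤ 1 * ((s/I) ^ (1-γ)) := by
              apply mul_le_mul he hb _ zero_le_one
              exact Real.rpow_nonneg (mul_nonneg hsI.le (Real.rpow_nonneg (hG0 u) _)) _
          _ = (s/I) ^ (1-γ) := one_mul _
      rw [hgdef]
      exact (div_le_div_iff_of_pos_right h1γ).mpr hnum
    rw [repEQ g hgmeas hgnn hint]
    have hcongr : ∀ u, ENNReal.ofReal (g u) * ENNReal.ofReal (G u)
        = ENNReal.ofReal ((s/I) ^ (1-γ) / (1-γ))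
          * ENNReal.ofReal (Real.exp (-δ*u) * G u ^ (1/γ)) := by
      intro u
      rw [← ENNReal.ofReal_mul (hgnn u),
        ← ENNReal.ofReal_mul (by positivity : (0:ℝ) ≤ (s/I) ^ (1-γ) / (1-γ))]
      congr 1
      have hexps : (1/γ) * (1-γ) + 1 = 1/γ := by field_simp; ring
      have hGG : G u ^ ((1/γ) * (1-γ)) * G u = G u ^ (1/γ) := by
        calc G u ^ ((1/γ) * (1-γ)) * G u
            = G u ^ ((1/γ) * (1-γ)) * G u ^ (1:ℝ) := by rw [Real.rpow_one]
          _ = G u ^ ((1/γ) * (1-γ) + 1) :=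
              (Real.rpow_add' (hG0 u)
                (by rw [hexps]; exact one_div_ne_zero hγne)).symm
          _ = G u ^ (1/γ) := by rw [hexps]
      have hmul : ((s/I) * G u ^ (1/γ)) ^ (1-γ)
          = (s/I) ^ (1-γ) * G u ^ ((1/γ) * (1-γ)) := by
        rw [Real.mul_rpow hsI.le (Real.rpow_nonneg (hG0 u) _), ← Real.rpow_mul (hG0 u)]
      calc g u * G u
          = Real.exp (-δ*u) * ((s/I) * G u ^ (1/γ)) ^ (1-γ) / (1-γ) * G u := by
            rw [hgdef]
        _ = (s/I) ^ (1-γ) / (1-γ)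
            * (Real.exp (-δ*u) * (G u ^ ((1/γ) * (1-γ)) * G u)) := by
            rw [hmul]; ring
        _ = (s/I) ^ (1-γ) / (1-γ) * (Real.exp (-δ*u) * G u ^ (1/γ)) := by rw [hGG]
    rw [lintegral_congr hcongr, lintegral_const_mul' _ _ ENNReal.ofReal_ne_top, hIlin,
      ← ENNReal.ofReal_mul (by positivity : (0:ℝ) ≤ (s/I) ^ (1-γ) / (1-γ)),
      ENNReal.toReal_ofReal (by positivity)]
    have hsplit : I ^ γ * I ^ (1-γ) = I := by
      rw [← Real.rpow_add hIpos]; norm_num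
    have hpow_pos : (0:ℝ) < I ^ (1-γ) := Real.rpow_pos_of_pos hIpos _
    rw [Real.div_rpow hs.le hIpos.le]
    field_simp
    linear_combination (-1:ℝ) * hsplit
  · -- Part 3: the optimal drawdown spends the principal
    have : ∀ t : ℝ, Real.exp (-δ*t) * ((s/I) * G t ^ (1/γ))
        = (s/I) * (Real.exp (-δ*t) * G t ^ (1/γ)) := fun t => by ring
    rw [integral_congr_ae (ae_of_all _ this), integral_const_mul, ← hI,
      div_mul_cancel₀ _ hIpos.ne']
end

section
/- Let δ ≥ 0 and let c : [0,∞) → [0,∞) be measurable such that A(t) := ∫_t^∞ e^{−δ(u−t)} c(u) du satisfies 0 < A(t) < ∞ for every t ≥ 0. Let s_0 ≥ A(0), let 0 = T_0 < T_1 < ... < T_m be times, and let e_1, ..., e_m ≥ 0 be credit transfers. Define s(T_0) := s_0 and recursively, for k = 1, ..., m: r(u) := c(u) · s(T_{k-1})/A(T_{k-1}) for u ∈ [T_{k-1}, T_k) (and r(u) := c(u) · s(T_m)/A(T_m) for u ≥ T_m), and s(T_k) := s(T_{k-1}) e^{δ(T_k − T_{k-1})} − ∫_{T_{k-1}}^{T_k}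 e^{δ(T_k − u)} r(u) du + e_k. Then for every u ∈ [T_{k-1}, T_k) (taking T_{m+1} = ∞), r(u) − c(u) = c(u) · [(s_0 − A(0))/A(0) + Σ_{l=1}^{k-1} e_l/A(T_l)]; in particular r(u) ≥ c(u) for all u ≥ 0. -/
open MeasureTheory Finset

/-!
Divide the cash value by the present value of the remaining DC drawdowns. Over an
inter-death period the DA pays `c` scaled by this ratio, and rolling the present value forward
shows that the ratio is then unchanged, except for the jump `e_k / A(T_k)` at the `k`-th death.
Hence in the `k`-th period `r = c · (s₀ / A(0) + ∑_{l<k} e_l / A(T_l))`, and the bracket is at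
least `1` because `s₀ ≥ A(0)` and every credit transfer is non-negative.
-/

noncomputable def presentValue (δ : ℝ) (c : ℝ → ℝ) (t : ℝ) : ℝ :=
  ∫ u in Set.Ioi t, Real.exp (-δ * (u - t)) * c u

theorem presentValue_mul_exp_sub_intervalIntegral {δ a b : ℝ} {c : ℝ → ℝ}
    (hc : IntegrableOn (fun u => Real.exp (-δ * u) * c u) (Set.Ioi a)) (hab : a ≤ b) :
    presentValue δ c a * Real.exp (δ * (b - a)) - ∫ u in a..b, Real.exp (δ * (b - u)) * c u
      = presentValue δ c b := by
  set g := fun u => Real.exp (δ * (b - u)) * c u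
  have hg : IntegrableOn g (Set.Ioi a) := by
    have hg_eq : g = fun u => Real.exp (δ * b) * (Real.exp (-δ * u) * c u) := by
      funext u
      simp only [g, ← mul_assoc, ← Real.exp_add]
      ring_nf
    exact hg_eq ▸ hc.const_mul _
  have hPa : presentValue δ c a * Real.exp (δ * (b - a)) = ∫ u in Set.Ioi a, g u := by
    rw [presentValue, ← integral_mul_const]
    congr 1 with u
    simp only [g, mul_right_comm _ (c u), ← Real.exp_add]
    ring_nf
  have hPb : presentValue δ c b = ∫ u in Set.Ioi b, g u := by
    rw [presentValue]
    congr 1 with u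
    simp only [g]
    ring_nf
  rw [hPa, hPb, intervalIntegral.integral_of_le hab, ← Set.Ioc_union_Ioi_eq_Ioi hab,
    setIntegral_union (Set.Ioc_disjoint_Ioi le_rfl) measurableSet_Ioi
      (hg.mono_set Set.Ioc_subset_Ioi_self) (hg.mono_set (Set.Ioi_subset_Ioi hab))]
  ring

theorem intervalIntegral_mul_eq_const_mul_of_eqOn_Ico {a b κ : ℝ} {w f g : ℝ → ℝ}
    (hab : a ≤ b) (hfg : ∀ u ∈ Set.Ico a b, f u = κ * g u) :
    ∫ u in a..b, w u * f u = κ * ∫ u in a..b, w u * g u := by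
  rw [intervalIntegral.integral_of_le hab, intervalIntegral.integral_of_le hab,
    integral_Ioc_eq_integral_Ioo, integral_Ioc_eq_integral_Ioo, ← integral_const_mul]
  refine setIntegral_congr_fun measurableSet_Ioo fun u hu => ?_
  simp only [hfg u (Set.Ioo_subset_Ico_self hu)]
  ring

theorem cashValue_div_step {δ a b s s' e Aa Ab : ℝ} {c r : ℝ → ℝ} (hab : a ≤ b)
    (hAa : Aa ≠ 0) (hAb : Ab ≠ 0)
    (hA : Aa * Real.exp (δ * (b - a)) - ∫ u in a..b, Real.exp (δ * (b - u)) * c u = Ab)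
    (hr : ∀ u ∈ Set.Ico a b, r u = c u * s / Aa)
    (hs' : s' = s * Real.exp (δ * (b - a)) - (∫ u in a..b, Real.exp (δ * (b - u)) * r u) + e) :
    s' / Ab = s / Aa + e / Ab := by
  have hr' : ∀ u ∈ Set.Ico a b, r u = s / Aa * c u := fun u hu => by
    rw [hr u hu]; ring
  have hs'A : s' = s / Aa * Ab + e := by
    rw [hs', intervalIntegral_mul_eq_const_mul_of_eqOn_Ico hab hr', ← hA]
    field_simp
  rw [hs'A]
  field_simp

theorem eq_add_sum_Icc_of_forall_succ {x d : ℕ → ℝ} {n : ℕ}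
    (h : ∀ k < n, x (k + 1) = x k + d (k + 1)) : x n = x 0 + ∑ l ∈ Icc 1 n, d l := by
  induction n with
  | zero => simp
  | succ n ih =>
    rw [sum_Icc_succ_top (Nat.le_add_left 1 n), h n n.lt_succ_self,
      ih fun k hk => h k (Nat.lt_succ_of_lt hk), add_assoc]

theorem exists_period {T : ℕ → ℝ} {m : ℕ} {u : ℝ} (hu : T 0 ≤ u) :
    ∃ k, 1 ≤ k ∧ k ≤ m + 1 ∧ T (k - 1) ≤ u ∧ (k ≤ m → u < T k) := by
  classical
  have hex : ∃ k, k ≤ m → u < T k := ⟨m + 1, fun h => absurd h (by omega)⟩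
  have hk0 : Nat.find hex ≠ 0 := fun h0 => (Nat.find_spec hex (by omega)).not_ge (h0 ▸ hu)
  have hprev := Nat.find_min hex (Nat.sub_one_lt hk0)
  push Not at hprev
  exact ⟨Nat.find hex, Nat.one_le_iff_ne_zero.2 hk0,
    Nat.find_le fun h => absurd h (by omega), hprev.2, Nat.find_spec hex⟩

theorem stmt_13_general (δ : ℝ)
    (c : ℝ → ℝ) (hc_nn : ∀ u, 0 ≤ c u)
    (hc_int : IntegrableOn (fun u => Real.exp (-δ*u) * c u) (Set.Ioi 0))
    (A : ℝ → ℝ)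
    (hA : ∀ t, 0 ≤ t → A t = ∫ u in Set.Ioi t, Real.exp (-δ*(u - t)) * c u)
    (hApos : ∀ t, 0 ≤ t → 0 < A t)
    (s0 : ℝ) (hs0 : A 0 ≤ s0)
    (m : ℕ) (T : ℕ → ℝ) (hT0 : T 0 = 0)
    (hTmono : ∀ k, k < m → T k < T (k + 1))
    (e : ℕ → ℝ) (he : ∀ k, 1 ≤ k → k ≤ m → 0 ≤ e k)
    (S : ℕ → ℝ) (hS0 : S 0 = s0)
    (r : ℝ → ℝ)
    (hr : ∀ k, 1 ≤ k → k ≤ m → ∀ u, T (k - 1) ≤ u → u < T k →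
      r u = c u * S (k - 1) / A (T (k - 1)))
    (hrlast : ∀ u, T m ≤ u → r u = c u * S m / A (T m))
    (hSrec : ∀ k, 1 ≤ k → k ≤ m →
      S k = S (k - 1) * Real.exp (δ * (T k - T (k - 1)))
        - (∫ u in T (k - 1)..T k, Real.exp (δ * (T k - u)) * r u) + e k) :
    (∀ k, 1 ≤ k → k ≤ m + 1 → ∀ u, T (k - 1) ≤ u → (k ≤ m → u < T k) →
      r u - c u
        = c u * ((s0 - A 0) / A 0 + ∑ l ∈ Finset.Icc 1 (k - 1), e l / A (T l))) ∧
    (∀ u, 0 ≤ u → c u ≤ r u) := by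
  have hTnn : ∀ k ≤ m, 0 ≤ T k := fun k hk =>
    hT0 ▸ (strictMonoOn_Iic_of_lt_succ (fun j hj => by simpa using hTmono j hj)).monotoneOn
      (Set.mem_Iic.2 (Nat.zero_le m)) hk (Nat.zero_le k)
  have hA0 : A 0 ≠ 0 := (hApos 0 le_rfl).ne'
  have hratio : ∀ k ≤ m, S k / A (T k) = s0 / A 0 + ∑ l ∈ Icc 1 k, e l / A (T l) := by
    intro k hk
    rw [eq_add_sum_Icc_of_forall_succ (x := fun k => S k / A (T k)) fun j hj => ?_, hS0, hT0]
    have hTj := hTnn j (by omega)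
    have hTj1 := hTnn (j + 1) (by omega)
    refine cashValue_div_step (hTmono j (by omega)).le (hApos _ hTj).ne' (hApos _ hTj1).ne'
      ?_ (fun u hu => hr (j + 1) (by omega) (by omega) u hu.1 hu.2)
      (hSrec (j + 1) (by omega) (by omega))
    rw [hA _ hTj, hA _ hTj1]
    exact presentValue_mul_exp_sub_intervalIntegral
      (hc_int.mono_set (Set.Ioi_subset_Ioi hTj)) (hTmono j (by omega)).le
  have hexcess : ∀ k, 1 ≤ k → k ≤ m + 1 → ∀ u, T (k - 1) ≤ u → (k ≤ m → u < T k) →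
      r u - c u
        = c u * ((s0 - A 0) / A 0 + ∑ l ∈ Icc 1 (k - 1), e l / A (T l)) := by
    intro k hk1 hkm u hu1 hu2
    have hru : r u = c u * (S (k - 1) / A (T (k - 1))) := by
      rw [← mul_div_assoc]
      rcases Nat.lt_or_ge k (m + 1) with hk | hk
      · exact hr k hk1 (by omega) u hu1 (hu2 (by omega))
      · obtain rfl : k = m + 1 := by omega
        exact hrlast u hu1
    rw [hru, hratio (k - 1) (by omega), sub_div, div_self hA0]
    ring
  refine ⟨hexcess, fun u hu => ?_⟩
  obtain ⟨k, hk1, hkm, hu1, hu2⟩ := exists_period (m := m) (hT0 ▸ hu : T 0 ≤ u)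
  have hbracket : 0 ≤ (s0 - A 0) / A 0 + ∑ l ∈ Icc 1 (k - 1), e l / A (T l) := by
    refine add_nonneg (div_nonneg (sub_nonneg.2 hs0) (hApos 0 le_rfl).le) (sum_nonneg ?_)
    intro l hl
    rw [mem_Icc] at hl
    exact div_nonneg (he l hl.1 (by omega)) (hApos _ (hTnn l (by omega))).le
  linarith [hexcess k hk1 hkm u hu1 hu2, mul_nonneg (hc_nn u) hbracket]

/-- A DA plan dominates any DC plan: rescaling the DC drawdown `c` by the current cash
value in each inter-death period yields DA payments `r` with
`r(u) - c(u) = c(u) [(s₀ - A(0))/A(0) + ∑_{l<k} e_l/A(T_l)] ≥ 0`. -/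
theorem stmt_13 (δ : ℝ) (hδ : 0 ≤ δ)
    (c : ℝ → ℝ) (hc_meas : Measurable c) (hc_nn : ∀ u, 0 ≤ c u)
    (hc_int : IntegrableOn (fun u => Real.exp (-δ*u) * c u) (Set.Ioi 0))
    (A : ℝ → ℝ)
    (hA : ∀ t, 0 ≤ t → A t = ∫ u in Set.Ioi t, Real.exp (-δ*(u - t)) * c u)
    (hApos : ∀ t, 0 ≤ t → 0 < A t)
    (s0 : ℝ) (hs0 : A 0 ≤ s0)
    (m : ℕ) (T : ℕ → ℝ) (hT0 : T 0 = 0)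
    (hTmono : ∀ k, k < m → T k < T (k + 1))
    (e : ℕ → ℝ) (he : ∀ k, 1 ≤ k → k ≤ m → 0 ≤ e k)
    (S : ℕ → ℝ) (hS0 : S 0 = s0)
    (r : ℝ → ℝ)
    (hr : ∀ k, 1 ≤ k → k ≤ m → ∀ u, T (k - 1) ≤ u → u < T k →
      r u = c u * S (k - 1) / A (T (k - 1)))
    (hrlast : ∀ u, T m ≤ u → r u = c u * S m / A (T m))
    (hSrec : ∀ k, 1 ≤ k → k ≤ m →
      S k = S (k - 1) * Real.exp (δ * (T k - T (k - 1)))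
        - (∫ u in T (k - 1)..T k, Real.exp (δ * (T k - u)) * r u) + e k) :
    (∀ k, 1 ≤ k → k ≤ m + 1 → ∀ u, T (k - 1) ≤ u → (k ≤ m → u < T k) →
      r u - c u
        = c u * ((s0 - A 0) / A 0 + ∑ l ∈ Finset.Icc 1 (k - 1), e l / A (T l))) ∧
    (∀ u, 0 ≤ u → c u ≤ r u) :=
  stmt_13_general δ c hc_nn hc_int A hA hApos s0 hs0 m T hT0 hTmono e he S hS0 r hr hrlast hSrec
end

section
/- Let δ ≥ 0, ρ > 0, s_0 > 0, times 0 = T_0 < T_1 < ... < T_m, and credit transfers e_1, ..., e_m ≥ 0. Define s(T_0) := s_0 and s(T_k) := s(T_{k-1}) e^{−ρ(T_k − T_{k-1})} + e_k for k = 1, ..., m; define r(u) := (δ + ρ) s(T_k) e^{−ρ(u − T_k)} for u ∈ [T_k, T_{k+1}) (with T_{m+1} = ∞, k = 0, ..., m) and c(u) := (δ + ρ) s_0 e^{−ρu} for u ≥ 0. Then: (i) for each k ≥ 1, s(T_{k-1}) e^{δ(T_k − T_{k-1})} − ∫_{T_{k-1}}^{T_k} e^{δ(T_k − u)} (δ +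 ρ) s(T_{k-1}) e^{−ρ(u − T_{k-1})} du = s(T_{k-1}) e^{−ρ(T_k − T_{k-1})}; and (ii) for every u ≥ 0, r(u) − c(u) = Σ_{k=1}^m (δ + ρ) e^{−ρ(u − T_k)} e_k · 1_{T_k ≤ u} ≥ 0. -/
/-!
(i) is the fundamental theorem of calculus: `u ↦ -s e^{δ(b-u) - ρ(u-a)}` is an antiderivative of
the integrand. (ii) The cash value discounted to time `0` at rate `ρ`, `S k e^{ρ T k}`, jumps by
exactly `e k e^{ρ T k}` at the `k`-th death, so it equals `s₀ + ∑_{j ≤ k} e j e^{ρ T j}`.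
Multiplying by `(δ + ρ) e^{-ρ u}` for the `k` with `T k ≤ u < T (k + 1)` splits `r u` into the
DC drawdown `c u` and the accumulated mortality credits.
-/

open MeasureTheory Finset Real

theorem accrual_sub_integral_payout (δ ρ s a b : ℝ) :
    s * exp (δ * (b - a))
      - (∫ u in a..b, exp (δ * (b - u)) * ((δ + ρ) * s * exp (-ρ * (u - a))))
      = s * exp (-ρ * (b - a)) := by
  have hF : ∀ u, HasDerivAt (fun v => -s * exp (δ * (b - v) - ρ * (v - a)))
      (exp (δ * (b - u)) * ((δ + ρ) * s * exp (-ρ * (u - a)))) u := by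
    intro u
    refine ((((hasDerivAt_id u).const_sub b).const_mul δ).sub
      (((hasDerivAt_id u).sub_const a).const_mul ρ)).exp.const_mul (-s) |>.congr_deriv ?_
    simp only [Pi.sub_apply, id]
    rw [show δ * (b - u) - ρ * (u - a) = δ * (b - u) + -ρ * (u - a) by ring, exp_add]
    ring
  rw [intervalIntegral.integral_eq_sub_of_hasDerivAt (fun u _ => hF u)
    ((by fun_prop : Continuous _).intervalIntegrable _ _)]
  simp only [sub_self, mul_zero, zero_sub, sub_zero]
  ring_nf

theorem mul_exp_eq_add_sum_of_rec {ρ : ℝ} {T e S : ℕ → ℝ} {m : ℕ}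
    (hS : ∀ k, 1 ≤ k → k ≤ m → S k = S (k - 1) * exp (-ρ * (T k - T (k - 1))) + e k)
    {k : ℕ} (hk : k ≤ m) :
    S k * exp (ρ * T k) = S 0 * exp (ρ * T 0) + ∑ j ∈ Icc 1 k, e j * exp (ρ * T j) := by
  induction k with
  | zero => simp
  | succ k ih =>
    have hrec := hS (k + 1) (by omega) hk
    rw [Nat.add_sub_cancel] at hrec
    have hdecay : exp (-ρ * (T (k + 1) - T k)) * exp (ρ * T (k + 1)) = exp (ρ * T k) := by
      rw [← exp_add]; ring_nf
    rw [sum_Icc_succ_top (by omega), hrec]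
    linear_combination ih (by omega) + S k * hdecay

theorem payout_sub_eq_sum_credits {ρ : ℝ} {T e S : ℕ → ℝ} {m : ℕ}
    (hS : ∀ k, 1 ≤ k → k ≤ m → S k = S (k - 1) * exp (-ρ * (T k - T (k - 1))) + e k)
    {k : ℕ} (hk : k ≤ m) (κ u : ℝ) :
    κ * S k * exp (-ρ * (u - T k)) - κ * S 0 * exp (-ρ * (u - T 0))
      = ∑ j ∈ Icc 1 k, κ * exp (-ρ * (u - T j)) * e j := by
  have hsplit : ∀ t, exp (-ρ * (u - t)) = exp (-ρ * u) * exp (ρ * t) := fun t => by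
    rw [← exp_add]; ring_nf
  simp only [hsplit]
  have hsum : ∑ j ∈ Icc 1 k, κ * (exp (-ρ * u) * exp (ρ * T j)) * e j
      = κ * exp (-ρ * u) * ∑ j ∈ Icc 1 k, e j * exp (ρ * T j) := by
    rw [mul_sum]; exact sum_congr rfl fun j _ => by ring
  rw [hsum]
  linear_combination κ * exp (-ρ * u) * mul_exp_eq_add_sum_of_rec hS hk

theorem exists_le_iff_le_of_monotoneOn {α : Type*} [Preorder α] {T : ℕ → α} {m : ℕ}
    (hT : MonotoneOn T (Set.Iic m)) {u : α} (hu : T 0 ≤ u) :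
    ∃ k ≤ m, ∀ j ≤ m, T j ≤ u ↔ j ≤ k := by
  classical
  let k := Nat.findGreatest (fun j => T j ≤ u) m
  have hkm : k ≤ m := Nat.findGreatest_le m
  have hTk : T k ≤ u := Nat.findGreatest_spec (P := fun j => T j ≤ u) (Nat.zero_le m) hu
  exact ⟨k, hkm, fun j hj => ⟨Nat.le_findGreatest (P := fun j => T j ≤ u) hj,
    fun hjk => (hT (hjk.trans hkm) hkm hjk).trans hTk⟩⟩

theorem sum_indicator_Ici_eq_sum_Icc {α M : Type*} [Preorder α] [AddCommMonoid M]
    {T : ℕ → α} {m k : ℕ} {u : α} (hk : ∀ j ≤ m, T j ≤ u ↔ j ≤ k) (hkm : k ≤ m) (f : ℕ → α → M) :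
    ∑ j ∈ Icc 1 m, (Set.Ici (T j)).indicator (f j) u = ∑ j ∈ Icc 1 k, f j u := by
  classical
  have hIcc : Icc 1 k = (Icc 1 m).filter (T · ≤ u) := by
    ext j
    simp only [mem_Icc, mem_filter]
    constructor
    · rintro ⟨h1, hjk⟩; exact ⟨⟨h1, hjk.trans hkm⟩, (hk j (hjk.trans hkm)).2 hjk⟩
    · rintro ⟨⟨h1, hjm⟩, hju⟩; exact ⟨h1, (hk j hjm).1 hju⟩
  rw [hIcc, sum_filter]
  exact sum_congr rfl fun j _ => Set.indicator_apply _ _ _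

theorem stmt_14_general (δ ρ s0 : ℝ) (hδ : 0 ≤ δ) (hρ : 0 < ρ)
    (m : ℕ) (T : ℕ → ℝ) (hT0 : T 0 = 0)
    (hTmono : ∀ k, k < m → T k < T (k + 1))
    (e : ℕ → ℝ) (he : ∀ k, 1 ≤ k → k ≤ m → 0 ≤ e k)
    (S : ℕ → ℝ) (hS0 : S 0 = s0)
    (hSrec : ∀ k, 1 ≤ k → k ≤ m →
      S k = S (k - 1) * Real.exp (-ρ * (T k - T (k - 1))) + e k)
    (r c : ℝ → ℝ)
    (hr : ∀ k, k < m → ∀ u, T k ≤ u → u < T (k + 1) →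
      r u = (δ + ρ) * S k * Real.exp (-ρ * (u - T k)))
    (hrlast : ∀ u, T m ≤ u → r u = (δ + ρ) * S m * Real.exp (-ρ * (u - T m)))
    (hc : ∀ u, c u = (δ + ρ) * s0 * Real.exp (-ρ * u)) :
    (∀ k, 1 ≤ k → k ≤ m →
      S (k - 1) * Real.exp (δ * (T k - T (k - 1)))
        - (∫ u in T (k - 1)..T k,
            Real.exp (δ * (T k - u)) * ((δ + ρ) * S (k - 1) * Real.exp (-ρ * (u - T (k - 1)))))
      = S (k - 1) * Real.exp (-ρ * (T k - T (k - 1)))) ∧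
    (∀ u, 0 ≤ u →
      r u - c u = (∑ k ∈ Finset.Icc 1 m,
        Set.indicator (Set.Ici (T k)) (fun v => (δ + ρ) * Real.exp (-ρ * (v - T k)) * e k) u) ∧
      0 ≤ r u - c u) := by
  refine ⟨fun k _ _ => accrual_sub_integral_payout δ ρ _ _ _, fun u hu => ?_⟩
  have hT : MonotoneOn T (Set.Iic m) := (strictMonoOn_Iic_of_lt_succ hTmono).monotoneOn
  obtain ⟨k, hkm, hk⟩ := exists_le_iff_le_of_monotoneOn hT (hT0 ▸ hu)
  have hru : r u = (δ + ρ) * S k * exp (-ρ * (u - T k)) := by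
    rcases hkm.lt_or_eq with hlt | rfl
    · refine hr k hlt u ((hk k hkm).2 le_rfl) (lt_of_not_ge fun hle => ?_)
      have := (hk (k + 1) hlt).1 hle
      omega
    · exact hrlast u ((hk k le_rfl).2 le_rfl)
  have hdiff : r u - c u = ∑ j ∈ Icc 1 m,
      (Set.Ici (T j)).indicator (fun v => (δ + ρ) * exp (-ρ * (v - T j)) * e j) u := by
    rw [sum_indicator_Ici_eq_sum_Icc hk hkm, hru, hc, ← payout_sub_eq_sum_credits hSrec hkm,
      hS0, hT0, sub_zero]
  refine ⟨hdiff, hdiff ▸ sum_nonneg fun j hj => Set.indicator_nonneg (fun v _ => ?_) u⟩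
  rw [mem_Icc] at hj
  exact mul_nonneg (mul_nonneg (by linarith) (exp_nonneg _)) (he j hj.1 hj.2)

/-- Constant-force-of-mortality comparison of the optimal DA plan with the optimal DC
drawdown: (i) the accrual recursion with exponential payout reduces to exponential
decay at rate `ρ`, and (ii) the DA payments exceed the DC drawdowns by exactly the
accumulated mortality credits. -/
theorem stmt_14 (δ ρ s0 : ℝ) (hδ : 0 ≤ δ) (hρ : 0 < ρ) (hs0 : 0 < s0)
    (m : ℕ) (T : ℕ → ℝ) (hT0 : T 0 = 0)
    (hTmono : ∀ k, k < m → T k < T (k + 1))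
    (e : ℕ → ℝ) (he : ∀ k, 1 ≤ k → k ≤ m → 0 ≤ e k)
    (S : ℕ → ℝ) (hS0 : S 0 = s0)
    (hSrec : ∀ k, 1 ≤ k → k ≤ m →
      S k = S (k - 1) * Real.exp (-ρ * (T k - T (k - 1))) + e k)
    (r c : ℝ → ℝ)
    (hr : ∀ k, k < m → ∀ u, T k ≤ u → u < T (k + 1) →
      r u = (δ + ρ) * S k * Real.exp (-ρ * (u - T k)))
    (hrlast : ∀ u, T m ≤ u → r u = (δ + ρ) * S m * Real.exp (-ρ * (u - T m)))
    (hc : ∀ u, c u = (δ + ρ) * s0 * Real.exp (-ρ * u)) :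
    (∀ k, 1 ≤ k → k ≤ m →
      S (k - 1) * Real.exp (δ * (T k - T (k - 1)))
        - (∫ u in T (k - 1)..T k,
            Real.exp (δ * (T k - u)) * ((δ + ρ) * S (k - 1) * Real.exp (-ρ * (u - T (k - 1)))))
      = S (k - 1) * Real.exp (-ρ * (T k - T (k - 1)))) ∧
    (∀ u, 0 ≤ u →
      r u - c u = (∑ k ∈ Finset.Icc 1 m,
        Set.indicator (Set.Ici (T k)) (fun v => (δ + ρ) * Real.exp (-ρ * (v - T k)) * e k) u) ∧
      0 ≤ r u - c u) :=
  stmt_14_general δ ρ s0 hδ hρ m T hT0 hTmono e he S hS0 hSrec r c hr hrlast hc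
end

section
/- Let n ≥ 2 and let s_1, ..., s_n and π_1, ..., π_n be strictly positive real numbers such that the π_i are not all equal. Then there exists an index i such that π_i · (Σ_{j=1}^n s_j) < Σ_{j=1}^n π_j s_j; equivalently, the equitable-tontine initial cash value s_i(0) := (π_i s_i / Σ_{j=1}^n π_j s_j) · Σ_{j=1}^n s_j satisfies s_i(0) < s_i for that index i. -/
open Finset

/-- In an equitable tontine with heterogeneous weights, some participant's initial
cash value `s_i(0) = (π_i s_i / ∑ π_j s_j) ∑ s_j` is strictly below the initial
investment `s_i`; equivalently `π_i ∑ s_j < ∑ π_j s_j` for some `i`. -/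
theorem stmt_15 (n : ℕ) (hn : 2 ≤ n) (s pw : Fin n → ℝ)
    (hs : ∀ i, 0 < s i) (hpw : ∀ i, 0 < pw i)
    (hne : ∃ i j, pw i ≠ pw j) :
    ∃ i, pw i * (∑ j, s j) < ∑ j, pw j * s j ∧
      (pw i * s i / ∑ j, pw j * s j) * (∑ j, s j) < s i := by
  have hne' : Nonempty (Fin n) := ⟨⟨0, by omega⟩⟩
  obtain ⟨i₀, hi₀⟩ := Finite.exists_min pw
  obtain ⟨a, b, hab⟩ := hne
  have hk : ∃ k, pw i₀ < pw k := by
    rcases lt_or_ge (pw a) (pw b) with h | h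
    · exact ⟨b, lt_of_le_of_lt (hi₀ a) h⟩
    · exact ⟨a, lt_of_le_of_lt (hi₀ b) (lt_of_le_of_ne h hab.symm)⟩
  obtain ⟨k, hk⟩ := hk
  have h1 : pw i₀ * (∑ j, s j) < ∑ j, pw j * s j := by
    rw [Finset.mul_sum]
    apply Finset.sum_lt_sum
    · intro j _
      exact mul_le_mul_of_nonneg_right (hi₀ j) (hs j).le
    · exact ⟨k, Finset.mem_univ k, mul_lt_mul_of_pos_right hk (hs k)⟩
  have hS : 0 < ∑ j, pw j * s j :=
    Finset.sum_pos (fun j _ => mul_pos (hpw j) (hs j)) Finset.univ_nonempty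
  refine ⟨i₀, h1, ?_⟩
  rw [div_mul_eq_mul_div, div_lt_iff₀ hS]
  have := hs i₀
  nlinarith [mul_lt_mul_of_pos_left h1 (hs i₀)]
end

section
/- Let δ ∈ ℝ, s ≥ 0, times 0 = T_0 < T_1 < ... < T_m, and non-negative credit transfers e_1, ..., e_m. Define the cash value by s(0) := s, s(t) := s(T_{k-1}) e^{δ(t − T_{k-1})} for t ∈ (T_{k-1}, T_k) (no payments between death times), and at each death time T_k the participant receives a lump-sum payment ΔR_k and the credit transfer e_k, so that s(T_k) = s(T_k−) + e_k − ΔR_k, where ΔR_k := e_k (each payment equals the credit transfer received at that time). Then s(t) = s e^{δt} for all t ≥ 0; in particular, the discounted cash value e^{−δt} s(t) is constantly equal to the initial investment s, all cash values are non-negative, and the total discounted payments equal Σ_{k=1}^m e^{−δ T_k} e_k ≥ 0. -/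
/-!
Writing `D t = exp (-δ t) * s(t)` for the discounted cash value, the rule
`s(t) = s(a) exp (δ (t - a))` says exactly that `D t = D a`. Accumulation between death
times and after the last one is of this form, and so is the jump at a death time once the
payment cancels the credit transfer. Hence `D` is constant, equal to `D 0 = s`.
-/

open Finset

theorem exp_neg_mul_mul_eq_iff (δ a t x y : ℝ) :
    Real.exp (-δ * t) * y = Real.exp (-δ * a) * x ↔ y = x * Real.exp (δ * (t - a)) := by
  rw [show δ * (t - a) = -δ * a - -δ * t by ring, Real.exp_sub, ← mul_div_assoc,
    eq_div_iff (Real.exp_pos _).ne', mul_comm y, mul_comm x]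

theorem exists_lt_le_succ_of_lt_of_le {α : Type*} [LinearOrder α] (T : ℕ → α) {t : α}
    (h0 : T 0 < t) {m : ℕ} (hm : t ≤ T m) : ∃ k < m, T k < t ∧ t ≤ T (k + 1) := by
  induction m with
  | zero => exact absurd hm (not_le.2 h0)
  | succ m ih =>
    rcases le_or_gt t (T m) with hle | hlt
    · obtain ⟨k, hk, hkt⟩ := ih hle
      exact ⟨k, hk.trans (Nat.lt_succ_self m), hkt⟩
    · exact ⟨m, Nat.lt_succ_self m, hlt, hm⟩

theorem apply_eq_apply_zero_of_forall_succ_eq {α : Type*} (u : ℕ → α) {m : ℕ}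
    (h : ∀ k < m, u (k + 1) = u k) : ∀ k ≤ m, u k = u 0 := by
  intro k hk
  induction k with
  | zero => rfl
  | succ k ih => rw [h k hk, ih (Nat.le_of_succ_le hk)]

theorem stmt_16_general (δ s : ℝ) (hs : 0 ≤ s)
    (m : ℕ) (T : ℕ → ℝ) (hT0 : T 0 = 0)
    (e : ℕ → ℝ) (he : ∀ k, 1 ≤ k → k ≤ m → 0 ≤ e k)
    (ΔR : ℕ → ℝ) (hΔR : ∀ k, 1 ≤ k → k ≤ m → ΔR k = e k)
    (sfun : ℝ → ℝ) (hsfun0 : sfun 0 = s)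
    (hbetween : ∀ k, 1 ≤ k → k ≤ m → ∀ t, T (k - 1) < t → t < T k →
      sfun t = sfun (T (k - 1)) * Real.exp (δ * (t - T (k - 1))))
    (hjump : ∀ k, 1 ≤ k → k ≤ m →
      sfun (T k) = sfun (T (k - 1)) * Real.exp (δ * (T k - T (k - 1))) + e k - ΔR k)
    (hafter : ∀ t, T m < t → sfun t = sfun (T m) * Real.exp (δ * (t - T m))) :
    (∀ t, 0 ≤ t → sfun t = s * Real.exp (δ * t)) ∧
    (∀ t, 0 ≤ t → Real.exp (-δ * t) * sfun t = s) ∧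
    (∀ t, 0 ≤ t → 0 ≤ sfun t) ∧
    (∑ k ∈ Finset.Icc 1 m, Real.exp (-δ * T k) * ΔR k
      = ∑ k ∈ Finset.Icc 1 m, Real.exp (-δ * T k) * e k) ∧
    0 ≤ ∑ k ∈ Finset.Icc 1 m, Real.exp (-δ * T k) * e k := by
  have hdeath : ∀ k ≤ m, Real.exp (-δ * T k) * sfun (T k) = s := by
    refine fun k hk ↦ (apply_eq_apply_zero_of_forall_succ_eq
      (fun k ↦ Real.exp (-δ * T k) * sfun (T k)) (fun k hk ↦ ?_) k hk).trans
      (by simp [hT0, hsfun0])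
    have hjump_k := hjump (k + 1) k.succ_pos hk
    rw [hΔR (k + 1) k.succ_pos hk, add_sub_cancel_right, Nat.add_sub_cancel] at hjump_k
    exact (exp_neg_mul_mul_eq_iff ..).2 hjump_k
  have hdisc : ∀ t, 0 ≤ t → Real.exp (-δ * t) * sfun t = s := by
    intro t ht
    rcases ht.eq_or_lt with rfl | hpos
    · simp [hsfun0]
    rcases le_or_gt t (T m) with hle | hgt
    · obtain ⟨k, hk, hlt, hle'⟩ := exists_lt_le_succ_of_lt_of_le T (hT0 ▸ hpos) hle
      rcases hle'.eq_or_lt with rfl | hlt'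
      · exact hdeath _ hk
      · have hacc := hbetween (k + 1) k.succ_pos hk t hlt hlt'
        rw [Nat.add_sub_cancel] at hacc
        rw [(exp_neg_mul_mul_eq_iff ..).2 hacc, hdeath k hk.le]
    · rw [(exp_neg_mul_mul_eq_iff ..).2 (hafter t hgt), hdeath m le_rfl]
  have hvalue : ∀ t, 0 ≤ t → sfun t = s * Real.exp (δ * t) := fun t ht ↦ by
    simpa using (exp_neg_mul_mul_eq_iff δ 0 t s (sfun t)).1 (by simpa using hdisc t ht)
  refine ⟨hvalue, hdisc, fun t ht ↦ hvalue t ht ▸ by positivity, ?_, ?_⟩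
  · exact sum_congr rfl fun k hk ↦ by rw [hΔR k (mem_Icc.1 hk).1 (mem_Icc.1 hk).2]
  · exact sum_nonneg fun k hk ↦
      mul_nonneg (Real.exp_pos _).le (he k (mem_Icc.1 hk).1 (mem_Icc.1 hk).2)

/-- A fair transfer tontine (payments at death times equal to the credit transfers
received) keeps the discounted cash value constant at the initial investment, has
non-negative cash values, and its total discounted payments equal the non-negative sum
of discounted credit transfers. -/
theorem stmt_16 (δ s : ℝ) (hs : 0 ≤ s)
    (m : ℕ) (T : ℕ → ℝ) (hT0 : T 0 = 0)
    (hTmono : ∀ k, k < m → T k < T (k + 1))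
    (e : ℕ → ℝ) (he : ∀ k, 1 ≤ k → k ≤ m → 0 ≤ e k)
    (ΔR : ℕ → ℝ) (hΔR : ∀ k, 1 ≤ k → k ≤ m → ΔR k = e k)
    (sfun : ℝ → ℝ) (hsfun0 : sfun 0 = s)
    (hbetween : ∀ k, 1 ≤ k → k ≤ m → ∀ t, T (k - 1) < t → t < T k →
      sfun t = sfun (T (k - 1)) * Real.exp (δ * (t - T (k - 1))))
    (hjump : ∀ k, 1 ≤ k → k ≤ m →
      sfun (T k) = sfun (T (k - 1)) * Real.exp (δ * (T k - T (k - 1))) + e k - ΔR k)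
    (hafter : ∀ t, T m < t → sfun t = sfun (T m) * Real.exp (δ * (t - T m))) :
    (∀ t, 0 ≤ t → sfun t = s * Real.exp (δ * t)) ∧
    (∀ t, 0 ≤ t → Real.exp (-δ * t) * sfun t = s) ∧
    (∀ t, 0 ≤ t → 0 ≤ sfun t) ∧
    (∑ k ∈ Finset.Icc 1 m, Real.exp (-δ * T k) * ΔR k
      = ∑ k ∈ Finset.Icc 1 m, Real.exp (-δ * T k) * e k) ∧
    0 ≤ ∑ k ∈ Finset.Icc 1 m, Real.exp (-δ * T k) * e k :=
  stmt_16_general δ s hs m T hT0 e he ΔR hΔR sfun hsfun0 hbetween hjump hafter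
end

section
/- Let τ_1 and τ_2 be independent random variables on a probability space with τ_i exponentially distributed with rate λ_i > 0 (i.e., P(τ_i > t) = e^{−λ_i t} for t ≥ 0), and let θ_1, θ_2 ≥ 0 and s_1, s_2 > 0. Then E[s_1 e^{−θ_1 τ_1} · 1_{τ_1 < τ_2}] = s_1 λ_1/(θ_1 + λ_1 + λ_2) and E[s_2 e^{−θ_2 τ_2} · 1_{τ_2 < τ_1}] = s_2 λ_2/(θ_2 + λ_1 + λ_2); consequently the actuarial fairness condition E[s_1 e^{−θ_1 τ_1} · 1_{τ_1 < τ_2}] = E[s_2 e^{−θ_2 τ_2} · 1_{τ_2 < τ_1}] holds if and only if s_1/s_2 = (λ_2/λ_1) · (θ_1 + λ_1 + λ_2)/(θ_2 + λ_1 + λ_2). -/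
/-!
By independence the joint law of `(τ₁, τ₂)` is a product, so Fubini turns the expected forfeited
balance of peer 1 into `s₁ E[e^{-θ₁ τ₁} P(τ₂ > x)|_{x = τ₁}] = s₁ ∫ e^{-(θ₁ + λ₂) x} dExp(λ₁)(x)`,
the Laplace transform of the exponential law at `θ₁ + λ₂`, which is `s₁ λ₁ / (θ₁ + λ₁ + λ₂)`.
The fairness criterion is then an identity between the two closed forms.
-/

open MeasureTheory
open scoped ProbabilityTheory

open Set Real

namespace ProbabilityTheory

lemma integral_exp_mul_expMeasure {r t : ℝ} (hr : 0 < r) (ht : t < r) :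
    ∫ x, exp (t * x) ∂expMeasure r = r / (r - t) := by
  have hdensity (x : ℝ) : (exponentialPDF r x).toReal • exp (t * x)
      = (Ici 0).indicator (fun x => r * exp ((t - r) * x)) x := by
    rw [exponentialPDF_eq, ENNReal.toReal_ofReal (by positivity), smul_eq_mul]
    split_ifs with hx
    · rw [indicator_of_mem (mem_Ici.2 hx), mul_assoc, ← exp_add]
      ring_nf
    · rw [indicator_of_notMem (by simpa using hx), zero_mul]
  calc ∫ x, exp (t * x) ∂expMeasure r
      = ∫ x, (exponentialPDF r x).toReal • exp (t * x) :=
        integral_withDensity_eq_integral_toReal_smul (by fun_prop)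
          (ae_of_all _ fun _ => ENNReal.ofReal_lt_top) _
    _ = ∫ x in Ioi 0, r * exp ((t - r) * x) := by
        simp only [hdensity]
        rw [integral_indicator measurableSet_Ici, integral_Ici_eq_integral_Ioi]
    _ = r / (r - t) := by
        rw [integral_const_mul, integral_exp_mul_Ioi (by linarith), mul_zero, exp_zero,
          neg_div, ← div_neg, neg_sub, mul_one_div]

lemma integrable_exp_mul_expMeasure {r t : ℝ} (hr : 0 < r) (ht : t < r) :
    Integrable (fun x => exp (t * x)) (expMeasure r) :=
  Integrable.of_integral_ne_zero <| by
    rw [integral_exp_mul_expMeasure hr ht]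
    exact (div_pos hr (sub_pos.2 ht)).ne'

lemma ae_nonneg_expMeasure (r : ℝ) : ∀ᵐ x ∂expMeasure r, 0 ≤ x := by
  rw [ae_iff]
  simp only [not_le]
  show (volume.withDensity (exponentialPDF r)) (Iio 0) = 0
  rw [withDensity_apply _ measurableSet_Iio]
  exact lintegral_exponentialPDF_of_nonpos le_rfl

lemma map_eq_expMeasure_of_measure_lt {Ω : Type*} {_ : MeasurableSpace Ω} {μ : Measure Ω}
    [IsProbabilityMeasure μ] {r : ℝ} (hr : 0 < r) {X : Ω → ℝ} (hX : Measurable X)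
    (hX_surv : ∀ t, 0 ≤ t → μ {ω | t < X ω} = ENNReal.ofReal (exp (-r * t))) :
    μ.map X = expMeasure r := by
  have := isProbabilityMeasure_expMeasure hr
  have := Measure.isProbabilityMeasure_map (μ := μ) hX.aemeasurable
  have hcdf (t : ℝ) (ht : 0 ≤ t) : μ.real {ω | X ω ≤ t} = 1 - exp (-(r * t)) := by
    have : {ω | X ω ≤ t} = {ω | t < X ω}ᶜ := by ext; simp
    rw [this, probReal_compl_eq_one_sub (measurableSet_lt measurable_const hX), measureReal_def,
      hX_surv t ht, ENNReal.toReal_ofReal (exp_nonneg _), neg_mul]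
  refine Measure.eq_of_cdf _ _ (StieltjesFunction.ext fun t => ?_)
  rw [cdf_expMeasure_eq hr, cdf_eq_real, map_measureReal_apply hX measurableSet_Iic]
  split_ifs with ht
  · exact hcdf t ht
  · refine le_antisymm ?_ measureReal_nonneg
    calc μ.real (X ⁻¹' Iic t) ≤ μ.real {ω | X ω ≤ 0} :=
          measureReal_mono fun ω (hω : X ω ≤ t) => show X ω ≤ 0 by linarith
      _ = 0 := by simp [hcdf 0 le_rfl]

lemma IndepFun.integral_indicator_lt {Ω : Type*} {_ : MeasurableSpace Ω} {μ : Measure Ω}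
    [IsFiniteMeasure μ] {X Y : Ω → ℝ} (hXY : IndepFun X Y μ) (hX : Measurable X)
    (hY : Measurable Y) {f : ℝ → ℝ} (hf : Integrable f (μ.map X)) :
    ∫ ω, {ω | X ω < Y ω}.indicator (fun ω => f (X ω)) ω ∂μ
      = ∫ x, f x * μ.real {ω | x < Y ω} ∂(μ.map X) := by
  set F : ℝ × ℝ → ℝ := {p | p.1 < p.2}.indicator (fun p => f p.1)
  have hF : Integrable F ((μ.map X).prod (μ.map Y)) :=
    (hf.comp_fst _).indicator (measurableSet_lt measurable_fst measurable_snd)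
  have hjoint : μ.map (fun ω => (X ω, Y ω)) = (μ.map X).prod (μ.map Y) :=
    (indepFun_iff_map_prod_eq_prod_map_map hX.aemeasurable hY.aemeasurable).1 hXY
  have hsection (x : ℝ) : (fun y => F (x, y)) = (Ioi x).indicator fun _ => f x := by
    ext y
    by_cases h : x < y <;> simp [F, h]
  calc ∫ ω, {ω | X ω < Y ω}.indicator (fun ω => f (X ω)) ω ∂μ
      = ∫ ω, F (X ω, Y ω) ∂μ := rfl
    _ = ∫ p, F p ∂((μ.map X).prod (μ.map Y)) := by
        rw [← hjoint, integral_map (hX.prodMk hY).aemeasurable (hjoint ▸ hF.aestronglyMeasurable)]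
    _ = ∫ x, f x * μ.real {ω | x < Y ω} ∂(μ.map X) := by
        rw [integral_prod _ hF]
        congr 1 with x
        rw [hsection, integral_indicator measurableSet_Ioi, setIntegral_const,
          map_measureReal_apply hY measurableSet_Ioi, smul_eq_mul, mul_comm]
        rfl

lemma integral_indicator_lt_mul_exp_eq {Ω : Type*} {_ : MeasurableSpace Ω} {μ : Measure Ω}
    [IsProbabilityMeasure μ] {lam1 lam2 θ : ℝ} (s : ℝ) (hlam1 : 0 < lam1) (hlam2 : 0 ≤ lam2)
    (hθ : -lam1 < θ) {τ1 τ2 : Ω → ℝ} (hm1 : Measurable τ1) (hm2 : Measurable τ2)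
    (hindep : IndepFun τ1 τ2 μ)
    (hlaw1 : ∀ t, 0 ≤ t → μ {ω | t < τ1 ω} = ENNReal.ofReal (exp (-lam1 * t)))
    (hlaw2 : ∀ t, 0 ≤ t → μ {ω | t < τ2 ω} = ENNReal.ofReal (exp (-lam2 * t))) :
    ∫ ω, {ω | τ1 ω < τ2 ω}.indicator (fun ω => s * exp (-θ * τ1 ω)) ω ∂μ
      = s * lam1 / (θ + lam1 + lam2) := by
  have hτ1 : μ.map τ1 = expMeasure lam1 := map_eq_expMeasure_of_measure_lt hlam1 hm1 hlaw1
  have hint : Integrable (fun x => s * exp (-θ * x)) (μ.map τ1) :=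
    hτ1 ▸ (integrable_exp_mul_expMeasure hlam1 (by linarith)).const_mul s
  have hsurv2 (x : ℝ) (hx : 0 ≤ x) : μ.real {ω | x < τ2 ω} = exp (-lam2 * x) := by
    rw [measureReal_def, hlaw2 x hx, ENNReal.toReal_ofReal (exp_nonneg _)]
  calc ∫ ω, {ω | τ1 ω < τ2 ω}.indicator (fun ω => s * exp (-θ * τ1 ω)) ω ∂μ
      = ∫ x, s * exp (-θ * x) * μ.real {ω | x < τ2 ω} ∂expMeasure lam1 := by
        rw [hindep.integral_indicator_lt hm1 hm2 hint, hτ1]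
    _ = ∫ x, s * exp (-(θ + lam2) * x) ∂expMeasure lam1 := by
        refine integral_congr_ae ?_
        filter_upwards [ae_nonneg_expMeasure lam1] with x hx
        rw [hsurv2 x hx, mul_assoc, ← exp_add]
        ring_nf
    _ = s * lam1 / (θ + lam1 + lam2) := by
        rw [integral_const_mul, integral_exp_mul_expMeasure hlam1 (by linarith)]
        ring

end ProbabilityTheory

lemma mul_div_eq_mul_div_iff_div_eq {K : Type*} [Field K] {s₁ s₂ a₁ a₂ d₁ d₂ : K}
    (hs₂ : s₂ ≠ 0) (ha₁ : a₁ ≠ 0) (hd₁ : d₁ ≠ 0) (hd₂ : d₂ ≠ 0) :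
    s₁ * a₁ / d₁ = s₂ * a₂ / d₂ ↔ s₁ / s₂ = a₂ / a₁ * (d₁ / d₂) := by
  rw [div_eq_div_iff hd₁ hd₂, div_mul_div_comm, div_eq_div_iff hs₂ (mul_ne_zero ha₁ hd₂)]
  constructor <;> intro h <;> linear_combination h

theorem stmt_17_general {Ω : Type*} [MeasureSpace Ω]
    [IsProbabilityMeasure (ℙ : Measure Ω)]
    (lam1 lam2 θ1 θ2 s1 s2 : ℝ) (hlam1 : 0 < lam1) (hlam2 : 0 < lam2)
    (hθ1 : 0 ≤ θ1) (hθ2 : 0 ≤ θ2) (hs2 : 0 < s2)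
    (τ1 τ2 : Ω → ℝ) (hm1 : Measurable τ1) (hm2 : Measurable τ2)
    (hindep : ProbabilityTheory.IndepFun τ1 τ2 ℙ)
    (hlaw1 : ∀ t, 0 ≤ t → ℙ {ω | t < τ1 ω} = ENNReal.ofReal (Real.exp (-lam1 * t)))
    (hlaw2 : ∀ t, 0 ≤ t → ℙ {ω | t < τ2 ω} = ENNReal.ofReal (Real.exp (-lam2 * t))) :
    (∫ ω, Set.indicator {ω' | τ1 ω' < τ2 ω'}
        (fun ω' => s1 * Real.exp (-θ1 * τ1 ω')) ω ∂ℙ)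
      = s1 * lam1 / (θ1 + lam1 + lam2) ∧
    (∫ ω, Set.indicator {ω' | τ2 ω' < τ1 ω'}
        (fun ω' => s2 * Real.exp (-θ2 * τ2 ω')) ω ∂ℙ)
      = s2 * lam2 / (θ2 + lam1 + lam2) ∧
    ((∫ ω, Set.indicator {ω' | τ1 ω' < τ2 ω'}
          (fun ω' => s1 * Real.exp (-θ1 * τ1 ω')) ω ∂ℙ)
        = (∫ ω, Set.indicator {ω' | τ2 ω' < τ1 ω'}
            (fun ω' => s2 * Real.exp (-θ2 * τ2 ω')) ω ∂ℙ)
      ↔ s1 / s2 = (lam2 / lam1) * ((θ1 + lam1 + lam2) / (θ2 + lam1 + lam2))) := by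
  have hforfeit1 := ProbabilityTheory.integral_indicator_lt_mul_exp_eq (θ := θ1) s1 hlam1
    hlam2.le (by linarith) hm1 hm2 hindep hlaw1 hlaw2
  have hforfeit2 := ProbabilityTheory.integral_indicator_lt_mul_exp_eq (θ := θ2) s2 hlam2
    hlam1.le (by linarith) hm2 hm1 hindep.symm hlaw2 hlaw1
  rw [add_right_comm θ2] at hforfeit2
  refine ⟨hforfeit1, hforfeit2, ?_⟩
  rw [hforfeit1, hforfeit2]
  exact mul_div_eq_mul_div_iff_div_eq hs2.ne' hlam1.ne' (by positivity) (by positivity)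

/-- Two-peer decentralized annuity with independent exponential lifetimes and
exponential drawdowns: expected forfeited balances equal `s_i λ_i/(θ_i+λ_1+λ_2)`, and
actuarial fairness holds iff `s_1/s_2 = (λ_2/λ_1)(θ_1+λ_1+λ_2)/(θ_2+λ_1+λ_2)`. -/
theorem stmt_17 {Ω : Type*} [MeasureSpace Ω]
    [IsProbabilityMeasure (ℙ : Measure Ω)]
    (lam1 lam2 θ1 θ2 s1 s2 : ℝ) (hlam1 : 0 < lam1) (hlam2 : 0 < lam2)
    (hθ1 : 0 ≤ θ1) (hθ2 : 0 ≤ θ2) (hs1 : 0 < s1) (hs2 : 0 < s2)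
    (τ1 τ2 : Ω → ℝ) (hm1 : Measurable τ1) (hm2 : Measurable τ2)
    (hindep : ProbabilityTheory.IndepFun τ1 τ2 ℙ)
    (hlaw1 : ∀ t, 0 ≤ t → ℙ {ω | t < τ1 ω} = ENNReal.ofReal (Real.exp (-lam1 * t)))
    (hlaw2 : ∀ t, 0 ≤ t → ℙ {ω | t < τ2 ω} = ENNReal.ofReal (Real.exp (-lam2 * t))) :
    (∫ ω, Set.indicator {ω' | τ1 ω' < τ2 ω'}
        (fun ω' => s1 * Real.exp (-θ1 * τ1 ω')) ω ∂ℙ)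
      = s1 * lam1 / (θ1 + lam1 + lam2) ∧
    (∫ ω, Set.indicator {ω' | τ2 ω' < τ1 ω'}
        (fun ω' => s2 * Real.exp (-θ2 * τ2 ω')) ω ∂ℙ)
      = s2 * lam2 / (θ2 + lam1 + lam2) ∧
    ((∫ ω, Set.indicator {ω' | τ1 ω' < τ2 ω'}
          (fun ω' => s1 * Real.exp (-θ1 * τ1 ω')) ω ∂ℙ)
        = (∫ ω, Set.indicator {ω' | τ2 ω' < τ1 ω'}
            (fun ω' => s2 * Real.exp (-θ2 * τ2 ω')) ω ∂ℙ)
      ↔ s1 / s2 = (lam2 / lam1) * ((θ1 + lam1 + lam2) / (θ2 + lam1 + lam2))) :=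
  stmt_17_general lam1 lam2 θ1 θ2 s1 s2 hlam1 hlam2 hθ1 hθ2 hs2 τ1 τ2 hm1 hm2 hindep hlaw1 hlaw2
end

section
/- Let τ_1 and τ_2 be independent random variables on a probability space with τ_i exponentially distributed with rate λ_i > 0 (i.e., P(τ_i > t) = e^{−λ_i t} for t ≥ 0), and let s_1, s_2 > 0. In the survivor-takes-all tontine, peer i's lifetime payout is (s_1 + s_2) · 1_{τ_i > τ_j} for {i, j} = {1, 2}. Then E[(s_1 + s_2) · 1_{τ_1 > τ_2}] = s_1 if and only if λ_1 s_1 = λ_2 s_2, and in that case also E[(s_1 + s_2) · 1_{τ_2 > τ_1}] = s_2. -/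
open MeasureTheory
open scoped ProbabilityTheory
/-!
By independence and Fubini, with the survival function `e^{-λ₁t}` of `τ₁` integrated against
the density `λ₂e^{-λ₂t}` of `τ₂`, `P(τ₂ < τ₁) = λ₂ / (λ₁ + λ₂)`. Peer 1's expected payout is
therefore `λ₂ (s₁ + s₂) / (λ₁ + λ₂)`, which equals `s₁` exactly when `λ₁ s₁ = λ₂ s₂`;
the claim for peer 2 is the same statement with the roles exchanged.
-/

open Set ProbabilityTheory

lemma cdf_expMeasure_of_nonneg {r t : ℝ} (hr : 0 < r) (ht : 0 ≤ t) :
    cdf (expMeasure r) t = 1 - Real.exp (-r * t) := by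
  rw [cdf_expMeasure_eq hr, if_pos ht, neg_mul]

lemma expMeasure_Ioi {r t : ℝ} (hr : 0 < r) (ht : 0 ≤ t) :
    expMeasure r (Ioi t) = ENNReal.ofReal (Real.exp (-r * t)) := by
  have := isProbabilityMeasure_expMeasure hr
  rw [← ofReal_measureReal, ← compl_Iic, probReal_compl_eq_one_sub measurableSet_Iic,
    ← cdf_eq_real, cdf_expMeasure_of_nonneg hr ht, sub_sub_cancel]

lemma eq_expMeasure_of_measure_Ioi {ν : Measure ℝ} [IsProbabilityMeasure ν] {r : ℝ} (hr : 0 < r)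
    (hν : ∀ t, 0 ≤ t → ν (Ioi t) = ENNReal.ofReal (Real.exp (-r * t))) :
    ν = expMeasure r := by
  have := isProbabilityMeasure_expMeasure hr
  have hcdf : ∀ t, 0 ≤ t → cdf ν t = 1 - Real.exp (-r * t) := fun t ht => by
    rw [cdf_eq_real, ← compl_Ioi, probReal_compl_eq_one_sub measurableSet_Ioi, measureReal_def,
      hν t ht, ENNReal.toReal_ofReal (Real.exp_nonneg _)]
  refine Measure.eq_of_cdf _ _ (StieltjesFunction.ext fun t => ?_)
  rcases le_or_gt 0 t with ht | ht
  · rw [hcdf t ht, cdf_expMeasure_of_nonneg hr ht]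
  · have hν0 : cdf ν 0 = 0 := by simp [hcdf 0 le_rfl]
    rw [cdf_expMeasure_eq hr, if_neg ht.not_ge]
    exact le_antisymm (hν0 ▸ monotone_cdf ν ht.le) (cdf_nonneg ν t)

lemma lintegral_Ioi_ofReal_mul_exp_neg_mul {c r : ℝ} (hc : 0 ≤ c) (hr : 0 < r) :
    ∫⁻ y in Ioi 0, ENNReal.ofReal (c * Real.exp (-r * y)) = ENNReal.ofReal (c / r) := by
  rw [← ofReal_integral_eq_lintegral_ofReal ((exp_neg_integrableOn_Ioi 0 hr).const_mul c)
      (Filter.Eventually.of_forall fun y => by positivity),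
    integral_const_mul, integral_exp_mul_Ioi (neg_lt_zero.2 hr)]
  congr 1
  field_simp
  simp

lemma expMeasure_prod_setOf_snd_lt_fst {a b : ℝ} (ha : 0 < a) (hb : 0 < b) :
    (expMeasure a).prod (expMeasure b) {p | p.2 < p.1} = ENNReal.ofReal (b / (a + b)) := by
  have := isProbabilityMeasure_expMeasure ha
  have := isProbabilityMeasure_expMeasure hb
  have hpdf : Measurable (exponentialPDF b) := (measurable_exponentialPDFReal b).ennreal_ofReal
  have hsurvival : Measurable fun y => expMeasure a (Ioi y) :=
    Antitone.measurable fun _ _ h => measure_mono (Ioi_subset_Ioi h)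
  have hintegrand : (fun y => exponentialPDF b y * expMeasure a (Ioi y))
      = (Ici 0).indicator fun y => ENNReal.ofReal (b * Real.exp (-(a + b) * y)) := by
    funext y
    rcases lt_or_ge y 0 with hy | hy
    · simp [exponentialPDF_of_neg hy, hy]
    · rw [exponentialPDF_of_nonneg hy, expMeasure_Ioi ha hy, ← ENNReal.ofReal_mul (by positivity),
        indicator_of_mem (mem_Ici.2 hy), mul_assoc, ← Real.exp_add]
      ring_nf
  rw [Measure.prod_apply_symm (measurableSet_lt measurable_snd measurable_fst)]
  change ∫⁻ y, expMeasure a (Ioi y) ∂volume.withDensity (exponentialPDF b) = _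
  rw [lintegral_withDensity_eq_lintegral_mul _ hpdf hsurvival]
  simp only [Pi.mul_apply]
  rw [hintegrand, lintegral_indicator measurableSet_Ici, setLIntegral_congr Ioi_ae_eq_Ici.symm,
    lintegral_Ioi_ofReal_mul_exp_neg_mul hb.le (by positivity)]

section Lifetimes

variable {Ω : Type*} [MeasurableSpace Ω] {μ : Measure Ω} [IsProbabilityMeasure μ]
  {a b : ℝ} {X Y : Ω → ℝ}

lemma map_eq_expMeasure_of_survival (ha : 0 < a) (hX : Measurable X)
    (hlaw : ∀ t, 0 ≤ t → μ {ω | t < X ω} = ENNReal.ofReal (Real.exp (-a * t))) :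
    μ.map X = expMeasure a := by
  have := Measure.isProbabilityMeasure_map (μ := μ) hX.aemeasurable
  exact eq_expMeasure_of_measure_Ioi ha fun t ht => by
    rw [Measure.map_apply hX measurableSet_Ioi]
    exact hlaw t ht

lemma measureReal_lt_of_indepFun_of_survival (ha : 0 < a) (hb : 0 < b)
    (hX : Measurable X) (hY : Measurable Y) (hXY : IndepFun X Y μ)
    (hlawX : ∀ t, 0 ≤ t → μ {ω | t < X ω} = ENNReal.ofReal (Real.exp (-a * t)))
    (hlawY : ∀ t, 0 ≤ t → μ {ω | t < Y ω} = ENNReal.ofReal (Real.exp (-b * t))) :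
    μ.real {ω | Y ω < X ω} = b / (a + b) := by
  have hjoint : μ.map (fun ω => (X ω, Y ω)) = (expMeasure a).prod (expMeasure b) := by
    rw [(indepFun_iff_map_prod_eq_prod_map_map hX.aemeasurable hY.aemeasurable).1 hXY,
      map_eq_expMeasure_of_survival ha hX hlawX, map_eq_expMeasure_of_survival hb hY hlawY]
  have hS : MeasurableSet {p : ℝ × ℝ | p.2 < p.1} := measurableSet_lt measurable_snd measurable_fst
  have hevent : μ {ω | Y ω < X ω} = ENNReal.ofReal (b / (a + b)) := by
    rw [← expMeasure_prod_setOf_snd_lt_fst ha hb, ← hjoint, Measure.map_apply (hX.prodMk hY) hS]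
    rfl
  rw [measureReal_def, hevent, ENNReal.toReal_ofReal (by positivity)]

lemma integral_survivor_payout_eq_iff (ha : 0 < a) (hb : 0 < b)
    (hX : Measurable X) (hY : Measurable Y) (hXY : IndepFun X Y μ)
    (hlawX : ∀ t, 0 ≤ t → μ {ω | t < X ω} = ENNReal.ofReal (Real.exp (-a * t)))
    (hlawY : ∀ t, 0 ≤ t → μ {ω | t < Y ω} = ENNReal.ofReal (Real.exp (-b * t))) (s₁ s₂ : ℝ) :
    ∫ ω, {ω' | Y ω' < X ω'}.indicator (fun _ => s₁ + s₂) ω ∂μ = s₁ ↔ a * s₁ = b * s₂ := by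
  rw [integral_indicator_const _ (measurableSet_lt hY hX),
    measureReal_lt_of_indepFun_of_survival ha hb hX hY hXY hlawX hlawY, smul_eq_mul,
    div_mul_eq_mul_div, div_eq_iff (by positivity)]
  constructor <;> intro h <;> linarith

end Lifetimes

theorem stmt_18_general {Ω : Type*} [MeasureSpace Ω]
    [IsProbabilityMeasure (ℙ : Measure Ω)]
    (lam1 lam2 s1 s2 : ℝ) (hlam1 : 0 < lam1) (hlam2 : 0 < lam2)
    (τ1 τ2 : Ω → ℝ) (hm1 : Measurable τ1) (hm2 : Measurable τ2)
    (hindep : ProbabilityTheory.IndepFun τ1 τ2 ℙ)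
    (hlaw1 : ∀ t, 0 ≤ t → ℙ {ω | t < τ1 ω} = ENNReal.ofReal (Real.exp (-lam1 * t)))
    (hlaw2 : ∀ t, 0 ≤ t → ℙ {ω | t < τ2 ω} = ENNReal.ofReal (Real.exp (-lam2 * t))) :
    ((∫ ω, Set.indicator {ω' | τ2 ω' < τ1 ω'} (fun _ => s1 + s2) ω ∂ℙ) = s1
      ↔ lam1 * s1 = lam2 * s2) ∧
    (lam1 * s1 = lam2 * s2 →
      (∫ ω, Set.indicator {ω' | τ1 ω' < τ2 ω'} (fun _ => s1 + s2) ω ∂ℙ) = s2) := by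
  refine ⟨integral_survivor_payout_eq_iff hlam1 hlam2 hm1 hm2 hindep hlaw1 hlaw2 s1 s2,
    fun hfair => ?_⟩
  rw [add_comm s1 s2]
  exact (integral_survivor_payout_eq_iff hlam2 hlam1 hm2 hm1 hindep.symm hlaw2 hlaw1 s2 s1).2
    hfair.symm

/-- Two-peer survivor-takes-all tontine with independent exponential lifetimes: the
expected lifetime payout `E[(s_1+s_2) 1_{τ_1>τ_2}]` equals `s_1` iff
`λ_1 s_1 = λ_2 s_2`, in which case peer 2 is also treated fairly. -/
theorem stmt_18 {Ω : Type*} [MeasureSpace Ω]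
    [IsProbabilityMeasure (ℙ : Measure Ω)]
    (lam1 lam2 s1 s2 : ℝ) (hlam1 : 0 < lam1) (hlam2 : 0 < lam2)
    (hs1 : 0 < s1) (hs2 : 0 < s2)
    (τ1 τ2 : Ω → ℝ) (hm1 : Measurable τ1) (hm2 : Measurable τ2)
    (hindep : ProbabilityTheory.IndepFun τ1 τ2 ℙ)
    (hlaw1 : ∀ t, 0 ≤ t → ℙ {ω | t < τ1 ω} = ENNReal.ofReal (Real.exp (-lam1 * t)))
    (hlaw2 : ∀ t, 0 ≤ t → ℙ {ω | t < τ2 ω} = ENNReal.ofReal (Real.exp (-lam2 * t))) :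
    ((∫ ω, Set.indicator {ω' | τ2 ω' < τ1 ω'} (fun _ => s1 + s2) ω ∂ℙ) = s1
      ↔ lam1 * s1 = lam2 * s2) ∧
    (lam1 * s1 = lam2 * s2 →
      (∫ ω, Set.indicator {ω' | τ1 ω' < τ2 ω'} (fun _ => s1 + s2) ω ∂ℙ) = s2) :=
  stmt_18_general lam1 lam2 s1 s2 hlam1 hlam2 τ1 τ2 hm1 hm2 hindep hlaw1 hlaw2
end
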